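/- arXiv:1610.06988 — 7 statements merged into one kernel-verified Lean document; each statement's English description precedes it below -/
import Mathlib

section
/- Let g > 0. For every integer k ≥ 1 and every ε > 0 there exist a real number β with β_k − ε < β < β_k and a GP solution φ on [0,L] with parameter β such that φ is not identically zero on [0,L] and sup_{x ∈ [0,L]} |φ(x)| < ε; moreover −φ is also a GP solution on [0,L] with parameter β, so there are at least two distinct nonzero GP solutions for this β. (Local bifurcation of new quantum states from (0, β_k) to the left of β_k in the repulsive case.) -/
open Set MeasureTheory intervalIntegral Filter Topology

/-- `φ` is a GP solution on `[a,b]` with parameter `β`: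
`φ` is continuous on `[a,b]`, twice continuously differentiable on `(a,b)`,
satisfies `-(ℏ²/(4m))·φ'' + (β - ℏλ)·φ + g·φ³ = 0` on `(a,b)`,
and `φ a = φ b = 0`. -/
def IsGPSolution (ℏ m lam g a b β : ℝ) (φ : ℝ → ℝ) : Prop :=
  ContinuousOn φ (Set.Icc a b) ∧
  ContDiffOn ℝ 2 φ (Set.Ioo a b) ∧
  (∀ x ∈ Set.Ioo a b,
    -(ℏ ^ 2 / (4 * m)) * deriv (deriv φ) x + (β - ℏ * lam) * φ x + g * (φ x) ^ 3 = 0) ∧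
  φ a = 0 ∧ φ b = 0

/-- The quantum critical points `β_k = ℏλ - (ℏ²/(4m))·(kπ/L)²`. -/
noncomputable def betaCrit (ℏ m lam L : ℝ) (k : ℕ) : ℝ :=
  ℏ * lam - (ℏ ^ 2 / (4 * m)) * ((k : ℝ) * Real.pi / L) ^ 2

/-!
Look for the solution as `φ = A sin T` with `T' = F(T)` and `F(ψ)² = p - d (1 + sin² ψ)`:
differentiating twice, `φ'' = -p φ + q φ³` exactly when `q A² = 2 d`. Such a `T` is the inverse
of the time map `t ↦ ∫₀ᵗ dψ / F(ψ)`, and `φ` vanishes at the times of `ψ = j π`. With `d = r p`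
the time map scales like `p^(-1/2)`, so one value of `p` puts the `k`-th zero at `L`, and the
bounds `√(p (1 - 2r)) ≤ F ≤ √(p (1 - r))` squeeze it into `[p_k / (1 - r), p_k / (1 - 2r)]`,
where `p_k = (k π / L)²`. Hence `β = ℏλ - (ℏ²/4m) p` lies just left of `β_k` and the amplitude
`A² = 2 r p / q` is small once `r` is; the cubic term being odd, `-φ` is a solution too.
-/

open Real

noncomputable def timeMap (F : ℝ → ℝ) (t : ℝ) : ℝ := ∫ ψ in (0 : ℝ)..t, (F ψ)⁻¹

section TimeMap

variable {F : ℝ → ℝ}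

@[simp] lemma timeMap_zero : timeMap F 0 = 0 := integral_same

lemma timeMap_const_mul (a t : ℝ) : timeMap (fun ψ => a * F ψ) t = a⁻¹ * timeMap F t := by
  simp only [timeMap, mul_inv, intervalIntegral.integral_const_mul]

lemma hasDerivAt_timeMap (hF : Continuous F) (hF0 : ∀ ψ, F ψ ≠ 0) (t : ℝ) :
    HasDerivAt (timeMap F) (F t)⁻¹ t :=
  ((hF.inv₀ hF0).integral_hasStrictDerivAt 0 t).hasDerivAt

lemma strictMono_timeMap (hF : Continuous F) (hF0 : ∀ ψ, 0 < F ψ) : StrictMono (timeMap F) :=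
  strictMono_of_hasDerivAt_pos (hasDerivAt_timeMap hF fun ψ => (hF0 ψ).ne')
    fun t => inv_pos.2 (hF0 t)

lemma inv_mul_sub_le_timeMap_sub (hF : Continuous F) (hF0 : ∀ ψ, 0 < F ψ) {M : ℝ}
    (hFM : ∀ ψ, F ψ ≤ M) {s t : ℝ} (hst : s ≤ t) :
    M⁻¹ * (t - s) ≤ timeMap F t - timeMap F s := by
  have hΘ := hasDerivAt_timeMap hF fun ψ => (hF0 ψ).ne'
  refine mul_sub_le_image_sub_of_le_deriv (fun t => (hΘ t).differentiableAt) (fun t => ?_) hst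
  rw [(hΘ t).deriv]
  exact inv_anti₀ (hF0 t) (hFM t)

lemma timeMap_sub_le_inv_mul_sub (hF : Continuous F) {a : ℝ} (ha : 0 < a) (haF : ∀ ψ, a ≤ F ψ)
    {s t : ℝ} (hst : s ≤ t) :
    timeMap F t - timeMap F s ≤ a⁻¹ * (t - s) := by
  have hΘ := hasDerivAt_timeMap hF fun ψ => (ha.trans_le (haF ψ)).ne'
  refine image_sub_le_mul_sub_of_deriv_le (fun t => (hΘ t).differentiableAt) (fun t => ?_) hst
  rw [(hΘ t).deriv]
  exact inv_anti₀ ha (haF t)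

lemma timeMap_surjective (hF : Continuous F) (hF0 : ∀ ψ, 0 < F ψ) {M : ℝ}
    (hFM : ∀ ψ, F ψ ≤ M) : Function.Surjective (timeMap F) := by
  have hM : 0 < M⁻¹ := inv_pos.2 ((hF0 0).trans_le (hFM 0))
  have hcont : Continuous (timeMap F) :=
    continuous_iff_continuousAt.2 fun t =>
      (hasDerivAt_timeMap hF (fun ψ => (hF0 ψ).ne') t).continuousAt
  refine hcont.surjective ?_ ?_
  · refine tendsto_atTop_mono' _ ?_ (tendsto_id.const_mul_atTop hM)
    filter_upwards [eventually_ge_atTop 0] with t ht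
    simpa using inv_mul_sub_le_timeMap_sub hF hF0 hFM ht
  · refine tendsto_atBot_mono' _ ?_ (tendsto_id.const_mul_atBot hM)
    filter_upwards [eventually_le_atBot 0] with t ht
    have := inv_mul_sub_le_timeMap_sub hF hF0 hFM ht
    simp only [timeMap_zero, zero_sub, id] at this ⊢
    linarith

lemma exists_hasDerivAt_comp_timeMap (hF : Continuous F) (hF0 : ∀ ψ, 0 < F ψ) {M : ℝ}
    (hFM : ∀ ψ, F ψ ≤ M) :
    ∃ T : ℝ → ℝ, (∀ x, HasDerivAt T (F (T x)) x) ∧ ∀ t, T (timeMap F t) = t := by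
  let e := (strictMono_timeMap hF hF0).orderIsoOfSurjective _ (timeMap_surjective hF hF0 hFM)
  refine ⟨e.symm, fun x => ?_, e.symm_apply_apply⟩
  simpa using (hasDerivAt_timeMap hF (fun ψ => (hF0 ψ).ne') (e.symm x)).of_local_left_inverse
    e.symm.continuous.continuousAt (inv_ne_zero (hF0 _).ne')
    (Eventually.of_forall e.apply_symm_apply)

end TimeMap

lemma contDiff_two_of_hasDerivAt {𝕜 E : Type*} [NontriviallyNormedField 𝕜]
    [NormedAddCommGroup E] [NormedSpace 𝕜 E] {f f' f'' : 𝕜 → E}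
    (hf : ∀ x, HasDerivAt f (f' x) x) (hf' : ∀ x, HasDerivAt f' (f'' x) x)
    (hf'' : Continuous f'') :
    ContDiff 𝕜 2 f ∧ ∀ x, deriv (deriv f) x = f'' x := by
  have hderiv : deriv f = f' := funext fun x => (hf x).deriv
  have hderiv' : deriv f' = f'' := funext fun x => (hf' x).deriv
  refine ⟨?_, fun x => by rw [hderiv, hderiv']⟩
  rw [show (2 : WithTop ℕ∞) = 1 + 1 from rfl, contDiff_succ_iff_deriv, hderiv,
    contDiff_one_iff_deriv, hderiv']
  exact ⟨fun x => (hf x).differentiableAt, by simp, fun x => (hf' x).differentiableAt, hf''⟩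

noncomputable def gpSpeed (p d ψ : ℝ) : ℝ := √(p - d * (1 + sin ψ ^ 2))

section GPSpeed

variable {p d : ℝ}

lemma continuous_gpSpeed : Continuous (gpSpeed p d) := by
  unfold gpSpeed
  fun_prop

lemma sqrt_sub_two_mul_le_gpSpeed (hd : 0 ≤ d) (ψ : ℝ) : √(p - 2 * d) ≤ gpSpeed p d ψ :=
  sqrt_le_sqrt (by nlinarith [sin_sq_le_one ψ])

lemma gpSpeed_le_sqrt_sub (hd : 0 ≤ d) (ψ : ℝ) : gpSpeed p d ψ ≤ √(p - d) :=
  sqrt_le_sqrt (by nlinarith [sq_nonneg (sin ψ)])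

lemma gpSpeed_pos (hd : 0 ≤ d) (hdp : 2 * d < p) (ψ : ℝ) : 0 < gpSpeed p d ψ :=
  (sqrt_pos.2 (by linarith)).trans_le (sqrt_sub_two_mul_le_gpSpeed hd ψ)

lemma gpSpeed_sq (hd : 0 ≤ d) (hdp : 2 * d < p) (ψ : ℝ) :
    gpSpeed p d ψ ^ 2 = p - d * (1 + sin ψ ^ 2) :=
  sq_sqrt (by nlinarith [sin_sq_le_one ψ])

lemma gpSpeed_mul (hp : 0 ≤ p) (r : ℝ) : gpSpeed p (r * p) = fun ψ => √p * gpSpeed 1 r ψ := by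
  ext ψ
  rw [gpSpeed, gpSpeed, ← sqrt_mul hp]
  ring_nf

lemma hasDerivAt_gpSpeed_comp (hd : 0 ≤ d) (hdp : 2 * d < p) {T : ℝ → ℝ} {x : ℝ}
    (hT : HasDerivAt T (gpSpeed p d (T x)) x) :
    HasDerivAt (fun x => gpSpeed p d (T x)) (-(d * sin (T x) * cos (T x))) x := by
  have hE : HasDerivAt (fun ψ => p - d * (1 + sin ψ ^ 2)) (-(d * (2 * sin (T x) * cos (T x))))
      (T x) := by
    simpa using (((hasDerivAt_sin (T x)).pow 2).const_add 1 |>.const_mul d).const_sub p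
  have hne : p - d * (1 + sin (T x) ^ 2) ≠ 0 := by nlinarith [sin_sq_le_one (T x)]
  refine ((hE.sqrt hne).comp x hT).congr_deriv ?_
  have hF := (gpSpeed_pos hd hdp (T x)).ne'
  simp only [gpSpeed] at hF ⊢
  field_simp

end GPSpeed

lemma exists_sin_profile {p d q : ℝ} (hd : 0 ≤ d) (hdp : 2 * d < p) (hq : 0 < q) :
    ∃ φ : ℝ → ℝ, ContDiff ℝ 2 φ ∧ (∀ x, deriv (deriv φ) x = -p * φ x + q * φ x ^ 3) ∧
      (∀ t, φ (timeMap (gpSpeed p d) t) = √(2 * d / q) * sin t) ∧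
      ∀ x, |φ x| ≤ √(2 * d / q) := by
  obtain ⟨T, hT, hTΘ⟩ := exists_hasDerivAt_comp_timeMap continuous_gpSpeed
    (gpSpeed_pos hd hdp) (gpSpeed_le_sqrt_sub hd)
  set A := √(2 * d / q)
  have hA : q * A ^ 2 = 2 * d := by
    rw [sq_sqrt (by positivity)]
    field_simp
  have hφ' (x : ℝ) : HasDerivAt (fun x => A * sin (T x)) (A * (cos (T x) * gpSpeed p d (T x))) x :=
    ((hasDerivAt_sin _).comp x (hT x)).const_mul A
  have hφ'' (x : ℝ) : HasDerivAt (fun x => A * (cos (T x) * gpSpeed p d (T x)))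
      (-p * (A * sin (T x)) + q * (A * sin (T x)) ^ 3) x := by
    refine ((((hasDerivAt_cos _).comp x (hT x)).mul
      (hasDerivAt_gpSpeed_comp hd hdp (hT x))).const_mul A).congr_deriv ?_
    simp only [Function.comp_apply]
    linear_combination (-A * sin (T x)) * gpSpeed_sq hd hdp (T x) -
      (A * d * sin (T x)) * sin_sq_add_cos_sq (T x) - (A * sin (T x) ^ 3) * hA
  have hTc : Continuous T := continuous_iff_continuousAt.2 fun x => (hT x).continuousAt
  obtain ⟨hC2, hode⟩ := contDiff_two_of_hasDerivAt hφ' hφ'' (by fun_prop)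
  refine ⟨_, hC2, hode, fun t => by simp only [hTΘ], fun x => ?_⟩
  rw [abs_mul, abs_of_nonneg (sqrt_nonneg _)]
  exact mul_le_of_le_one_right (sqrt_nonneg _) (abs_sin_le_one _)

section GPSolution

variable {ℏ m lam g a b β : ℝ} {φ : ℝ → ℝ}

lemma IsGPSolution.neg (h : IsGPSolution ℏ m lam g a b β φ) :
    IsGPSolution ℏ m lam g a b β (fun x => -φ x) := by
  obtain ⟨hcont, hC2, hode, ha, hb⟩ := h
  refine ⟨hcont.neg, hC2.neg, fun x hx => ?_, by simp [ha], by simp [hb]⟩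
  rw [deriv.fun_neg', deriv.fun_neg']
  linear_combination -hode x hx

lemma isGPSolution_of_deriv_deriv_eq {p q : ℝ} (hφ : ContDiff ℝ 2 φ)
    (hode : ∀ x, deriv (deriv φ) x = -p * φ x + q * φ x ^ 3) (hgq : g = ℏ ^ 2 / (4 * m) * q)
    (ha : φ a = 0) (hb : φ b = 0) :
    IsGPSolution ℏ m lam g a b (ℏ * lam - ℏ ^ 2 / (4 * m) * p) φ := by
  refine ⟨hφ.continuous.continuousOn, hφ.contDiffOn, fun x _ => ?_, ha, hb⟩
  rw [hode, hgq]
  ring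

end GPSolution

noncomputable def gpFrequency (L : ℝ) (k : ℕ) (r : ℝ) : ℝ :=
  (timeMap (gpSpeed 1 r) (k * π) / L) ^ 2

section GPFrequency

variable {L r : ℝ} {k : ℕ}

lemma timeMap_gpSpeed_gpFrequency (hL : 0 < L) (hk : 0 < k) (hr : 0 ≤ r) (hr2 : 2 * r < 1) :
    timeMap (gpSpeed (gpFrequency L k r) (r * gpFrequency L k r)) (k * π) = L := by
  have hJ : 0 < timeMap (gpSpeed 1 r) (k * π) := by
    rw [← timeMap_zero (F := gpSpeed 1 r)]
    exact strictMono_timeMap continuous_gpSpeed (gpSpeed_pos hr (by linarith))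
      (by positivity)
  have hp : 0 ≤ gpFrequency L k r := sq_nonneg _
  rw [gpSpeed_mul hp, timeMap_const_mul, gpFrequency, sqrt_sq (div_pos hJ hL).le]
  field_simp

lemma gpFrequency_mem_Icc (hL : 0 < L) (hr : 0 ≤ r) (hr2 : 2 * r < 1) :
    gpFrequency L k r ∈ Icc ((k * π / L) ^ 2 / (1 - r)) ((k * π / L) ^ 2 / (1 - 2 * r)) := by
  have hkπ : 0 ≤ (k : ℝ) * π := by positivity
  have hlow := inv_mul_sub_le_timeMap_sub continuous_gpSpeed (gpSpeed_pos hr (by linarith))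
    (gpSpeed_le_sqrt_sub (p := 1) hr) hkπ
  have hup := timeMap_sub_le_inv_mul_sub continuous_gpSpeed (sqrt_pos.2 (by linarith))
    (sqrt_sub_two_mul_le_gpSpeed (p := 1) hr) hkπ
  simp only [timeMap_zero, sub_zero] at hlow hup
  have hsq (s : ℝ) (hs : 0 ≤ s) : ((√s)⁻¹ * (k * π) / L) ^ 2 = (k * π / L) ^ 2 / s := by
    rw [div_pow, mul_pow, inv_pow, sq_sqrt hs, div_pow]
    ring
  rw [gpFrequency, ← hsq _ (by linarith), ← hsq _ (by linarith)]
  exact ⟨by gcongr, by gcongr; exact div_nonneg ((by positivity : (0 : ℝ) ≤ _).trans hlow) hL.le⟩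

lemma lt_gpFrequency (hL : 0 < L) (hk : 0 < k) (hr : 0 < r) (hr2 : 2 * r < 1) :
    (k * π / L) ^ 2 < gpFrequency L k r :=
  (lt_div_iff₀ (by linarith)).2 (by nlinarith [show 0 < (k * π / L) ^ 2 by positivity])
    |>.trans_le (gpFrequency_mem_Icc hL hr.le hr2).1

lemma tendsto_gpFrequency (hL : 0 < L) :
    Tendsto (gpFrequency L k) (𝓝[>] 0) (𝓝 ((k * π / L) ^ 2)) := by
  have hlim (c : ℝ) : Tendsto (fun r : ℝ => (k * π / L) ^ 2 / (1 - c * r)) (𝓝[>] 0)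
      (𝓝 ((k * π / L) ^ 2)) := by
    have : ContinuousAt (fun r : ℝ => (k * π / L) ^ 2 / (1 - c * r)) 0 := by
      fun_prop (disch := simp)
    simpa using this.tendsto.mono_left nhdsWithin_le_nhds
  have hsmall : ∀ᶠ r in 𝓝[>] (0 : ℝ), r ∈ Ioo 0 (1 / 2) := Ioo_mem_nhdsGT (by norm_num)
  refine tendsto_of_tendsto_of_tendsto_of_le_of_le' (by simpa using hlim 1) (hlim 2) ?_ ?_
  · filter_upwards [hsmall] with r hr
    simpa using (gpFrequency_mem_Icc hL hr.1.le (by linarith [hr.2])).1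
  · filter_upwards [hsmall] with r hr
    exact (gpFrequency_mem_Icc hL hr.1.le (by linarith [hr.2])).2

lemma exists_gpFrequency_sub_lt_and_amplitude_lt (hL : 0 < L) (c q : ℝ) {ε : ℝ} (hε : 0 < ε) :
    ∃ r, 0 < r ∧ 2 * r < 1 ∧ c * (gpFrequency L k r - (k * π / L) ^ 2) < ε ∧
      √(2 * (r * gpFrequency L k r) / q) < ε := by
  have hlim := tendsto_gpFrequency (k := k) hL
  have hgap : Tendsto (fun r => c * (gpFrequency L k r - (k * π / L) ^ 2)) (𝓝[>] 0) (𝓝 0) := by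
    have := (hlim.sub_const ((k * π / L) ^ 2)).const_mul c
    rwa [sub_self, mul_zero] at this
  have hamp : Tendsto (fun r => √(2 * (r * gpFrequency L k r) / q)) (𝓝[>] 0) (𝓝 0) := by
    simpa using
      ((((tendsto_nhdsWithin_of_tendsto_nhds tendsto_id).mul hlim).const_mul 2).div_const q).sqrt
  have hsmall : ∀ᶠ r in 𝓝[>] (0 : ℝ), r ∈ Ioo 0 (1 / 2) := Ioo_mem_nhdsGT (by norm_num)
  obtain ⟨r, hr, hgap, hamp⟩ := hsmall.and
    ((hgap.eventually (gt_mem_nhds hε)).and (hamp.eventually (gt_mem_nhds hε))) |>.exists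
  exact ⟨r, hr.1, by linarith [hr.2], hgap, hamp⟩

end GPFrequency

/-- for `g > 0`, local bifurcation of new quantum states from `(0, β_k)`
to the left of `β_k` in the repulsive case. -/
theorem stmt_0 (ℏ m lam L g : ℝ) (hℏ : 0 < ℏ) (hm : 0 < m) (hL : 0 < L)
    (hg : 0 < g) (k : ℕ) (hk : 1 ≤ k) (ε : ℝ) (hε : 0 < ε) :
    ∃ β : ℝ, ∃ φ : ℝ → ℝ,
      betaCrit ℏ m lam L k - ε < β ∧ β < betaCrit ℏ m lam L k ∧
      IsGPSolution ℏ m lam g 0 L β φ ∧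
      (∃ x ∈ Set.Icc (0:ℝ) L, φ x ≠ 0) ∧
      (∀ x ∈ Set.Icc (0:ℝ) L, |φ x| < ε) ∧
      IsGPSolution ℏ m lam g 0 L β (fun x => -φ x) ∧
      (∃ x ∈ Set.Icc (0:ℝ) L, φ x ≠ -φ x) := by
  unfold betaCrit
  set c := ℏ ^ 2 / (4 * m)
  have hc : 0 < c := by positivity
  obtain ⟨r, hr, hr2, hβ, hA⟩ :=
    exists_gpFrequency_sub_lt_and_amplitude_lt (k := k) hL c (g / c) hε
  have hpk := lt_gpFrequency hL hk hr hr2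
  have hΘL := timeMap_gpSpeed_gpFrequency hL hk hr.le hr2
  set p := gpFrequency L k r
  have hd : 0 < r * p := mul_pos hr ((by positivity : (0 : ℝ) < _).trans hpk)
  have hdp : 2 * (r * p) < p := by nlinarith
  obtain ⟨φ, hφC2, hode, hφΘ, hφA⟩ := exists_sin_profile hd.le hdp (div_pos hg hc)
  have hφ : IsGPSolution ℏ m lam g 0 L (ℏ * lam - c * p) φ :=
    isGPSolution_of_deriv_deriv_eq hφC2 hode (mul_div_cancel₀ g hc.ne').symm
      (by simpa using hφΘ 0) (by simpa [hΘL] using hφΘ (k * π))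
  set x₀ := timeMap (gpSpeed p (r * p)) (π / 2)
  have hmono := (strictMono_timeMap continuous_gpSpeed (gpSpeed_pos hd.le hdp)).monotone
  have hx₀ : x₀ ∈ Icc 0 L := by
    refine ⟨timeMap_zero (F := gpSpeed p (r * p)) ▸ hmono (by positivity), hΘL ▸ hmono ?_⟩
    nlinarith [pi_pos, show (1 : ℝ) ≤ k by exact_mod_cast hk]
  have hφx₀ : φ x₀ ≠ 0 := by
    rw [hφΘ, sin_pi_div_two, mul_one]
    exact (sqrt_pos.2 (div_pos (mul_pos two_pos hd) (div_pos hg hc))).ne'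
  refine ⟨_, φ, by linarith, by nlinarith, hφ, ⟨x₀, hx₀, hφx₀⟩,
    fun x _ => (hφA x).trans_lt hA, hφ.neg, ⟨x₀, hx₀, fun h => hφx₀ (by linarith)⟩⟩
end

section
/- Let g ≠ 0 and fix an integer k ≥ 1. Suppose (β_n)_{n∈ℕ} is a sequence of real numbers with β_n → β_k and (φ_n)_{n∈ℕ} is a sequence of GP solutions on [0,L] with parameter β_n, each continuously differentiable on [0,L] and not identically zero, such that sup_{x∈[0,L]}|φ_n(x)| + sup_{x∈[0,L]}|φ_n'(x)| → 0. Then there exist signs s_n ∈ {−1, +1} such that s_n·φ_n / (∫₀^L φ_n(x)² dx)^{1/2} converges in L²(0,L) to the normalized eigenfunction e_k(x) = √(2/L)·sin(kπx/L). (Bifurcating quantum states have, to leading order, the profile of the k-th Dirichlet eigenfunction.) -/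
open Set MeasureTheory intervalIntegral Filter Topology

open Real

/-!
Write `ω = kπ/L`. By the definition of `β_k`, a GP solution satisfies
`φ'' + ω² φ = (4m/ℏ²)((β - β_k) φ + g φ³)`, and the right-hand side is `o(‖φ‖_∞)` along the
sequence. Grönwall's inequality for the system `(φ, φ')`, compared with the solution
`a sin(ωx)`, `a = φ'(0)/ω`, of `ψ'' + ω² ψ = 0` with the same initial data, gives
`|φ - a sin(ω·)| ≤ r ‖φ‖_∞` with `r → 0`. Since `‖φ‖_∞ ≤ |a| + r ‖φ‖_∞`, this makes
`φ / a → sin(ω·)` uniformly, and normalizing in `L²` turns `1 / a` into `sign a / ‖φ‖₂`.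
-/

lemma gronwallBound_zero_mul (K c ε x : ℝ) :
    gronwallBound 0 K (c * ε) x = c * gronwallBound 0 K ε x := by
  unfold gronwallBound
  split_ifs <;> ring

lemma abs_le_gronwallBound_of_abs_deriv_add_sq_mul_le {L ω ε : ℝ} (hL : 0 < L) {d w w' : ℝ → ℝ}
    (hd : ContinuousOn d (Icc 0 L)) (hw : ContinuousOn w (Icc 0 L))
    (hd' : ∀ x ∈ Ioo 0 L, HasDerivAt d (w x) x) (hw' : ∀ x ∈ Ioo 0 L, HasDerivAt w (w' x) x)
    (hd0 : d 0 = 0) (hw0 : w 0 = 0) (hε : ∀ x ∈ Ioo 0 L, |w' x + ω ^ 2 * d x| ≤ ε) :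
    ∀ x ∈ Icc 0 L, |d x| ≤ gronwallBound 0 (1 + ω ^ 2) ε L := by
  have hε0 : 0 ≤ ε := (abs_nonneg _).trans (hε (L / 2) ⟨by linarith, by linarith⟩)
  set K := 1 + ω ^ 2
  have hK : 0 < K := by positivity
  set f : ℝ → ℝ × ℝ := fun x => (d x, w x)
  have hf : ContinuousOn f (Icc 0 L) := hd.prodMk hw
  have hbound_nonneg : 0 ≤ gronwallBound 0 K ε L := by
    simpa [gronwallBound_x0] using gronwallBound_mono le_rfl hε0 hK.le hL.le
  -- Grönwall only applies from interior starting points, where `w` is differentiable.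
  have hgron : ∀ x₀ ∈ Ioo 0 L, ∀ x ∈ Icc x₀ L, ‖f x‖ ≤ gronwallBound ‖f x₀‖ K ε L := by
    intro x₀ hx₀ x hx
    refine (norm_le_gronwallBound_of_norm_deriv_right_le (f' := fun x => (w x, w' x))
      (hf.mono (Icc_subset_Icc hx₀.1.le le_rfl)) (fun t ht => ?_) le_rfl (fun t ht => ?_) x hx
      ).trans (gronwallBound_mono (norm_nonneg _) hε0 hK.le (by linarith [hx.2, hx₀.1]))
    · have ht' : t ∈ Ioo 0 L := ⟨hx₀.1.trans_le ht.1, ht.2⟩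
      exact ((hd' t ht').prodMk (hw' t ht')).hasDerivWithinAt
    · have ht' : t ∈ Ioo 0 L := ⟨hx₀.1.trans_le ht.1, ht.2⟩
      have hdt : |d t| ≤ ‖f t‖ := norm_fst_le (f t)
      have hwt : |w t| ≤ ‖f t‖ := norm_snd_le (f t)
      have hw't : |w' t| ≤ ε + ω ^ 2 * ‖f t‖ := by
        calc |w' t| ≤ |w' t + ω ^ 2 * d t| + ω ^ 2 * |d t| := by
              have := abs_sub (w' t + ω ^ 2 * d t) (ω ^ 2 * d t)
              rwa [add_sub_cancel_right, abs_mul, abs_of_nonneg (sq_nonneg ω)] at this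
          _ ≤ ε + ω ^ 2 * ‖f t‖ := by gcongr; exact hε t ht'
      rw [Prod.norm_def]
      refine max_le ?_ ?_ <;> simp only [Real.norm_eq_abs] <;> nlinarith [norm_nonneg (f t)]
  intro x hx
  rcases hx.1.eq_or_lt with rfl | hx0
  · simpa [hd0] using hbound_nonneg
  have hf0 : Tendsto (fun x₀ => ‖f x₀‖) (𝓝[>] 0) (𝓝 0) := by
    have := ((hf 0 ⟨le_rfl, hL.le⟩).mono_of_mem_nhdsWithin (Icc_mem_nhdsGT hL)).tendsto.norm
    simpa [f, hd0, hw0] using this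
  have hcont : Continuous fun δ => gronwallBound δ K ε L := by
    simp only [gronwallBound_of_K_ne_0 hK.ne']
    fun_prop
  have hlim := (hcont.tendsto 0).comp hf0
  refine le_trans (norm_fst_le (f x)) (ge_of_tendsto hlim ?_)
  filter_upwards [Ioo_mem_nhdsGT hx0] with x₀ hx₀
  exact hgron x₀ ⟨hx₀.1, hx₀.2.trans_le hx.2⟩ x ⟨hx₀.2.le, hx.2⟩

lemma abs_sub_sin_le_gronwallBound {L ω ε : ℝ} (hL : 0 < L) (hω : ω ≠ 0) {φ : ℝ → ℝ}
    (hφ1 : ContDiffOn ℝ 1 φ (Icc 0 L)) (hφ2 : ContDiffOn ℝ 2 φ (Ioo 0 L)) (hφ0 : φ 0 = 0)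
    (hε : ∀ x ∈ Ioo 0 L, |deriv (deriv φ) x + ω ^ 2 * φ x| ≤ ε) :
    ∀ x ∈ Icc 0 L,
      |φ x - derivWithin φ (Icc 0 L) 0 / ω * sin (ω * x)| ≤ gronwallBound 0 (1 + ω ^ 2) ε L := by
  set A := derivWithin φ (Icc 0 L) 0
  have hsin (x : ℝ) : HasDerivAt (fun x => A / ω * sin (ω * x)) (A * cos (ω * x)) x :=
    (((hasDerivAt_id' x).const_mul ω).sin.const_mul (A / ω)).congr_deriv (by field_simp)
  have hcos (x : ℝ) : HasDerivAt (fun x => A * cos (ω * x)) (-(A * ω * sin (ω * x))) x :=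
    (((hasDerivAt_id' x).const_mul ω).cos.const_mul A).congr_deriv (by ring)
  have hderiv : ∀ x ∈ Ioo 0 L, HasDerivAt φ (derivWithin φ (Icc 0 L) x) x := fun x hx => by
    rw [derivWithin_of_mem_nhds (Icc_mem_nhds hx.1 hx.2)]
    exact (hφ2.differentiableOn (by norm_num) x hx).differentiableAt
      (Ioo_mem_nhds hx.1 hx.2) |>.hasDerivAt
  have hderiv2 : ∀ x ∈ Ioo 0 L,
      HasDerivAt (derivWithin φ (Icc 0 L)) (deriv (deriv φ) x) x := fun x hx => by
    have heq : deriv φ =ᶠ[𝓝 x] derivWithin φ (Icc 0 L) :=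
      Filter.eventually_of_mem (Ioo_mem_nhds hx.1 hx.2) fun y hy =>
        (derivWithin_of_mem_nhds (Icc_mem_nhds hy.1 hy.2)).symm
    have hφ' : ContDiffOn ℝ 1 (deriv φ) (Ioo 0 L) := hφ2.deriv_of_isOpen isOpen_Ioo (by norm_num)
    exact ((hφ'.differentiableOn one_ne_zero x hx).differentiableAt (Ioo_mem_nhds hx.1 hx.2)
      |>.hasDerivAt).congr_of_eventuallyEq heq.symm
  refine abs_le_gronwallBound_of_abs_deriv_add_sq_mul_le hL
    (w := fun x => derivWithin φ (Icc 0 L) x - A * cos (ω * x))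
    (w' := fun x => deriv (deriv φ) x + A * ω * sin (ω * x))
    (hφ1.continuousOn.sub (by fun_prop))
    ((hφ1.continuousOn_derivWithin (uniqueDiffOn_Icc hL) le_rfl).sub (by fun_prop))
    (fun x hx => (hderiv x hx).sub (hsin x))
    (fun x hx => ((hderiv2 x hx).sub (hcos x)).congr_deriv (sub_neg_eq_add _ _))
    (by simp [hφ0]) (by simp [A]) (fun x hx => ?_)
  convert hε x hx using 2
  field_simp
  ring

lemma abs_div_sub_le_of_abs_sub_le_mul {S : Set ℝ} {f e : ℝ → ℝ} {a M r x₀ : ℝ} (hr : r < 1)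
    (hM : 0 < M) (hx₀ : x₀ ∈ S) (hfx₀ : M ≤ |f x₀|) (he : ∀ x ∈ S, |e x| ≤ 1)
    (happrox : ∀ x ∈ S, |f x - a * e x| ≤ M * r) :
    a ≠ 0 ∧ ∀ x ∈ S, |f x / a - e x| ≤ r / (1 - r) := by
  have ha : M * (1 - r) ≤ |a| := by
    have h := abs_sub_abs_le_abs_sub (f x₀) (a * e x₀)
    have hae : |a * e x₀| ≤ |a| := by
      rw [abs_mul]; exact mul_le_of_le_one_right (abs_nonneg a) (he x₀ hx₀)
    linarith [happrox x₀ hx₀]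
  have ha0 : 0 < |a| := lt_of_lt_of_le (by nlinarith) ha
  refine ⟨abs_pos.mp ha0, fun x hx => ?_⟩
  calc |f x / a - e x| = |f x - a * e x| / |a| := by
        rw [← abs_div, sub_div, mul_div_cancel_left₀ _ (abs_pos.mp ha0)]
    _ ≤ M * r / (M * (1 - r)) := by
        exact div_le_div₀ ((abs_nonneg _).trans (happrox x hx)) (happrox x hx)
          (by nlinarith) ha
    _ = r / (1 - r) := mul_div_mul_left r (1 - r) hM.ne'

lemma tendsto_intervalIntegral_zero_of_abs_le {ι : Type*} {l : Filter ι} {a b : ℝ} (hab : a ≤ b)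
    {F : ι → ℝ → ℝ} {C : ι → ℝ} (hC : Tendsto C l (𝓝 0))
    (hF : ∀ᶠ i in l, ∀ x ∈ Icc a b, |F i x| ≤ C i) :
    Tendsto (fun i => ∫ x in a..b, F i x) l (𝓝 0) := by
  refine squeeze_zero_norm' (hF.mono fun i hi => norm_integral_le_of_norm_le_const fun x hx => ?_)
    (by simpa using hC.mul_const |b - a|)
  rw [uIoc_of_le hab] at hx
  exact hi x (Ioc_subset_Icc_self hx)

lemma tendsto_integral_sq_sub_normalized {ι : Type*} {l : Filter ι} {a b : ℝ} (hab : a ≤ b)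
    {g : ι → ℝ → ℝ} {h : ℝ → ℝ} {δ : ι → ℝ} (hg : ∀ i, ContinuousOn (g i) (Icc a b))
    (hh : ContinuousOn h (Icc a b)) (hh0 : 0 < ∫ x in a..b, h x ^ 2)
    (hδ : Tendsto δ l (𝓝 0)) (hgh : ∀ᶠ i in l, ∀ x ∈ Icc a b, |g i x - h x| ≤ δ i) :
    Tendsto (fun i => ∫ x in a..b,
      (g i x / √(∫ y in a..b, g i y ^ 2) - h x / √(∫ y in a..b, h y ^ 2)) ^ 2) l (𝓝 0) := by
  obtain ⟨H, hH⟩ := isCompact_Icc.exists_bound_of_continuousOn hh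
  simp only [Real.norm_eq_abs] at hH
  have hsq : ∀ f : ℝ → ℝ, ContinuousOn f (Icc a b) →
      IntervalIntegrable (fun x => f x ^ 2) MeasureTheory.volume a b := fun f hf =>
    (hf.pow 2).intervalIntegrable_of_Icc hab
  have hnorm : Tendsto (fun i => ∫ y in a..b, g i y ^ 2) l (𝓝 (∫ y in a..b, h y ^ 2)) := by
    have := tendsto_intervalIntegral_zero_of_abs_le hab
      (F := fun i y => g i y ^ 2 - h y ^ 2) (C := fun i => δ i * (δ i + 2 * H))
      (by simpa using hδ.mul (hδ.add_const (2 * H))) (hgh.mono fun i hi x hx => ?_)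
    · simp_rw [intervalIntegral.integral_sub (hsq _ (hg _)) (hsq h hh)] at this
      simpa using (this.add_const (∫ y in a..b, h y ^ 2)).congr fun i => sub_add_cancel _ _
    · have h1 := hi x hx
      have h2 : |g i x + h x| ≤ δ i + 2 * H := by
        calc |g i x + h x| = |(g i x - h x) + 2 * h x| := by ring_nf
          _ ≤ δ i + 2 * H := by
            refine (abs_add_le _ _).trans ?_
            rw [abs_mul, abs_two]
            linarith [hH x hx]
      rw [show g i x ^ 2 - h x ^ 2 = (g i x - h x) * (g i x + h x) by ring, abs_mul]
      exact mul_le_mul h1 h2 (abs_nonneg _) ((abs_nonneg _).trans h1)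
  have hc := hnorm.sqrt
  set c := √(∫ y in a..b, h y ^ 2)
  have hc0 : 0 < c := Real.sqrt_pos.mpr hh0
  refine tendsto_intervalIntegral_zero_of_abs_le hab (C := fun i =>
      (δ i / √(∫ y in a..b, g i y ^ 2) + H * |1 / √(∫ y in a..b, g i y ^ 2) - 1 / c|) ^ 2)
    ?_ (hgh.mono fun i hi x hx => ?_)
  · have hinv := (tendsto_const_nhds (x := (1 : ℝ))).div hc hc0.ne'
    simpa using ((hδ.div hc hc0.ne').add ((hinv.sub_const (1 / c)).abs.const_mul H)).pow 2
  · rw [abs_pow]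
    refine pow_le_pow_left₀ (abs_nonneg _) ?_ 2
    rw [show g i x / √(∫ y in a..b, g i y ^ 2) - h x / c
        = (g i x - h x) / √(∫ y in a..b, g i y ^ 2)
          + h x * (1 / √(∫ y in a..b, g i y ^ 2) - 1 / c) by ring]
    refine (abs_add_le _ _).trans (add_le_add ?_ ?_)
    · rw [abs_div, abs_of_nonneg (Real.sqrt_nonneg _)]
      exact div_le_div_of_nonneg_right (hi x hx) (Real.sqrt_nonneg _)
    · rw [abs_mul]
      exact mul_le_mul_of_nonneg_right (hH x hx) (abs_nonneg _)

lemma sign_mul_div_sqrt_integral_sq {a b c : ℝ} (hc : c ≠ 0) (f : ℝ → ℝ) (x : ℝ) :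
    (if 0 ≤ c then 1 else -1) * f x / √(∫ y in a..b, f y ^ 2) =
      f x / c / √(∫ y in a..b, (f y / c) ^ 2) := by
  simp_rw [div_pow]
  rw [intervalIntegral.integral_div, Real.sqrt_div' _ (sq_nonneg c), Real.sqrt_sq_eq_abs]
  split_ifs with h
  · rw [abs_of_nonneg h]; field_simp
  · rw [abs_of_neg (not_le.mp h)]; field_simp

lemma integral_sin_sq_nat_mul_pi_div {L : ℝ} (hL : L ≠ 0) {k : ℕ} (hk : k ≠ 0) :
    ∫ x in (0 : ℝ)..L, sin (k * π / L * x) ^ 2 = L / 2 := by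
  have hkπ : (k * π : ℝ) ≠ 0 := by positivity
  have hω : (k * π / L : ℝ) ≠ 0 := by positivity
  rw [intervalIntegral.integral_comp_mul_left (fun x => sin x ^ 2) hω, integral_sin_sq,
    show k * π / L * L = k * π by field_simp, sin_nat_mul_pi]
  simp
  field_simp

lemma exists_abs_eq_sSup_image_abs {a b : ℝ} (hab : a ≤ b) {f : ℝ → ℝ}
    (hf : ContinuousOn f (Icc a b)) :
    ∃ x₀ ∈ Icc a b, |f x₀| = sSup ((fun x => |f x|) '' Icc a b) ∧
      ∀ x ∈ Icc a b, |f x| ≤ sSup ((fun x => |f x|) '' Icc a b) := by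
  have hcpt := isCompact_Icc.image_of_continuousOn hf.abs
  obtain ⟨x₀, hx₀, hmax⟩ := hcpt.sSup_mem ((nonempty_Icc.mpr hab).image _)
  exact ⟨x₀, hx₀, hmax, fun x hx => le_csSup hcpt.bddAbove (mem_image_of_mem _ hx)⟩

lemma IsGPSolution.deriv_deriv_add_sq_mul {ℏ m lam g a b β L : ℝ} {φ : ℝ → ℝ} (hℏ : ℏ ≠ 0)
    (hm : m ≠ 0) (hsol : IsGPSolution ℏ m lam g a b β φ) (k : ℕ) :
    ∀ x ∈ Ioo a b, deriv (deriv φ) x + (k * π / L) ^ 2 * φ x =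
      4 * m / ℏ ^ 2 * ((β - betaCrit ℏ m lam L k) * φ x + g * φ x ^ 3) := by
  intro x hx
  have h := hsol.2.2.1 x hx
  unfold betaCrit
  field_simp at h ⊢
  linear_combination -h

lemma IsGPSolution.abs_sub_sin_le {ℏ m lam g L β M : ℝ} {k : ℕ} {φ : ℝ → ℝ} (hℏ : ℏ ≠ 0)
    (hm : 0 < m) (hL : 0 < L) (hk : k ≠ 0) (hsol : IsGPSolution ℏ m lam g 0 L β φ)
    (hC1 : ContDiffOn ℝ 1 φ (Icc 0 L)) (hM : ∀ x ∈ Icc 0 L, |φ x| ≤ M) :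
    ∀ x ∈ Icc 0 L, |φ x - derivWithin φ (Icc 0 L) 0 / (k * π / L) * sin (k * π / L * x)| ≤
      M * gronwallBound 0 (1 + (k * π / L) ^ 2)
        (4 * m / ℏ ^ 2 * (|β - betaCrit ℏ m lam L k| + |g| * M ^ 2)) L := by
  rw [← gronwallBound_zero_mul]
  refine abs_sub_sin_le_gronwallBound hL (by positivity) hC1 hsol.2.1 hsol.2.2.2.1 fun x hx => ?_
  have hMx := hM x (Ioo_subset_Icc_self hx)
  rw [hsol.deriv_deriv_add_sq_mul hℏ hm.ne' k x hx, abs_mul, abs_of_pos (by positivity)]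
  calc 4 * m / ℏ ^ 2 * |(β - betaCrit ℏ m lam L k) * φ x + g * φ x ^ 3|
      ≤ 4 * m / ℏ ^ 2 * (|β - betaCrit ℏ m lam L k| * M + |g| * M ^ 3) := by
        gcongr
        refine (abs_add_le _ _).trans ?_
        rw [abs_mul, abs_mul, abs_pow]
        gcongr
    _ = M * (4 * m / ℏ ^ 2 * (|β - betaCrit ℏ m lam L k| + |g| * M ^ 2)) := by ring

lemma IsGPSolution.eventually_abs_div_sub_sin_le {ℏ m lam L g : ℝ} (hℏ : ℏ ≠ 0) (hm : 0 < m)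
    (hL : 0 < L) {k : ℕ} (hk : k ≠ 0) {β : ℕ → ℝ} (hβ : Tendsto β atTop (𝓝 (betaCrit ℏ m lam L k)))
    {φ : ℕ → ℝ → ℝ} (hsol : ∀ n, IsGPSolution ℏ m lam g 0 L (β n) (φ n))
    (hC1 : ∀ n, ContDiffOn ℝ 1 (φ n) (Icc 0 L)) (hne : ∀ n, ∃ x ∈ Icc 0 L, φ n x ≠ 0)
    (hM : Tendsto (fun n => sSup ((fun x => |φ n x|) '' Icc 0 L)) atTop (𝓝 0)) :
    ∃ δ : ℕ → ℝ, Tendsto δ atTop (𝓝 0) ∧ ∀ᶠ n in atTop,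
      derivWithin (φ n) (Icc 0 L) 0 / (k * π / L) ≠ 0 ∧ ∀ x ∈ Icc 0 L,
        |φ n x / (derivWithin (φ n) (Icc 0 L) 0 / (k * π / L)) - sin (k * π / L * x)| ≤ δ n := by
  set ω : ℝ := k * π / L
  set M : ℕ → ℝ := fun n => sSup ((fun x => |φ n x|) '' Icc 0 L)
  set r : ℕ → ℝ := fun n => gronwallBound 0 (1 + ω ^ 2)
    (4 * m / ℏ ^ 2 * (|β n - betaCrit ℏ m lam L k| + |g| * M n ^ 2)) L
  have hr : Tendsto r atTop (𝓝 0) := by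
    have hε : Tendsto (fun n => 4 * m / ℏ ^ 2 * (|β n - betaCrit ℏ m lam L k| + |g| * M n ^ 2))
        atTop (𝓝 0) := by
      simpa using ((hβ.sub_const (betaCrit ℏ m lam L k)).abs.add
        ((hM.pow 2).const_mul |g|)).const_mul (4 * m / ℏ ^ 2)
    have := ((gronwallBound_continuous_ε 0 (1 + ω ^ 2) L).tendsto 0).comp hε
    rwa [gronwallBound_ε0_δ0] at this
  refine ⟨fun n => r n / (1 - r n), ?_, ?_⟩
  · rw [show (0 : ℝ) = 0 / (1 - 0) by simp]
    exact hr.div (tendsto_const_nhds.sub hr) (by norm_num)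
  filter_upwards [hr.eventually (gt_mem_nhds one_pos)] with n hrn
  obtain ⟨x₀, hx₀, hMx₀, hMbound⟩ := exists_abs_eq_sSup_image_abs hL.le (hsol n).1
  obtain ⟨y, hy, hφy⟩ := hne n
  exact abs_div_sub_le_of_abs_sub_le_mul hrn ((abs_pos.mpr hφy).trans_le (hMbound y hy)) hx₀
    hMx₀.ge (fun x _ => abs_sin_le_one _)
    ((hsol n).abs_sub_sin_le hℏ hm hL hk (hC1 n) hMbound)

theorem stmt_2_general (ℏ m lam L g : ℝ) (hℏ : 0 < ℏ) (hm : 0 < m) (hL : 0 < L)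
    (k : ℕ) (hk : 1 ≤ k)
    (β : ℕ → ℝ) (hβ : Filter.Tendsto β Filter.atTop (nhds (betaCrit ℏ m lam L k)))
    (φ : ℕ → ℝ → ℝ)
    (hsol : ∀ n, IsGPSolution ℏ m lam g 0 L (β n) (φ n))
    (hC1 : ∀ n, ContDiffOn ℝ 1 (φ n) (Set.Icc 0 L))
    (hne : ∀ n, ∃ x ∈ Set.Icc (0:ℝ) L, φ n x ≠ 0)
    (hsmall : Filter.Tendsto
      (fun n => (sSup ((fun x => |φ n x|) '' Set.Icc (0:ℝ) L)) +
        (sSup ((fun x => |deriv (φ n) x|) '' Set.Icc (0:ℝ) L)))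
      Filter.atTop (nhds 0)) :
    ∃ s : ℕ → ℝ, (∀ n, s n = 1 ∨ s n = -1) ∧
      Filter.Tendsto
        (fun n => ∫ x in (0:ℝ)..L,
          (s n * φ n x / Real.sqrt (∫ y in (0:ℝ)..L, (φ n y) ^ 2) -
            Real.sqrt (2 / L) * Real.sin ((k : ℝ) * Real.pi * x / L)) ^ 2)
        Filter.atTop (nhds 0) := by
  have hk0 : k ≠ 0 := by omega
  have hsSup (f : ℝ → ℝ) : 0 ≤ sSup ((fun x => |f x|) '' Icc 0 L) :=
    Real.sSup_nonneg (by rintro _ ⟨x, -, rfl⟩; exact abs_nonneg _)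
  have hM : Tendsto (fun n => sSup ((fun x => |φ n x|) '' Icc 0 L)) atTop (𝓝 0) :=
    squeeze_zero (fun n => hsSup _) (fun n => le_add_of_nonneg_right (hsSup _)) hsmall
  obtain ⟨δ, hδ, hclose⟩ :=
    IsGPSolution.eventually_abs_div_sub_sin_le hℏ.ne' hm hL hk0 hβ hsol hC1 hne hM
  set a : ℕ → ℝ := fun n => derivWithin (φ n) (Icc 0 L) 0 / (k * π / L)
  have hlim := tendsto_integral_sq_sub_normalized hL.le (g := fun n x => φ n x / a n)
    (h := fun x => sin (k * π / L * x)) (fun n => (hsol n).1.div_const _) (by fun_prop)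
    (by rw [integral_sin_sq_nat_mul_pi_div hL.ne' hk0]; positivity) hδ
    (hclose.mono fun n hn => hn.2)
  refine ⟨fun n => if 0 ≤ a n then 1 else -1, fun n => ite_eq_or_eq _ _ _, hlim.congr' ?_⟩
  filter_upwards [hclose] with n hn
  have he (x : ℝ) : √(2 / L) * sin (k * π * x / L) = sin (k * π / L * x) / √(L / 2) := by
    rw [← inv_div L 2, Real.sqrt_inv, mul_div_right_comm, inv_mul_eq_div]
  simp_rw [integral_sin_sq_nat_mul_pi_div hL.ne' hk0, he,
    sign_mul_div_sqrt_integral_sq (c := a n) hn.1]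

/-- bifurcating quantum states have, to leading order, the profile of
the `k`-th Dirichlet eigenfunction `e_k(x) = √(2/L)·sin(kπx/L)`. -/
theorem stmt_2 (ℏ m lam L g : ℝ) (hℏ : 0 < ℏ) (hm : 0 < m) (hL : 0 < L)
    (hg : g ≠ 0) (k : ℕ) (hk : 1 ≤ k)
    (β : ℕ → ℝ) (hβ : Filter.Tendsto β Filter.atTop (nhds (betaCrit ℏ m lam L k)))
    (φ : ℕ → ℝ → ℝ)
    (hsol : ∀ n, IsGPSolution ℏ m lam g 0 L (β n) (φ n))
    (hC1 : ∀ n, ContDiffOn ℝ 1 (φ n) (Set.Icc 0 L))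
    (hne : ∀ n, ∃ x ∈ Set.Icc (0:ℝ) L, φ n x ≠ 0)
    (hsmall : Filter.Tendsto
      (fun n => (sSup ((fun x => |φ n x|) '' Set.Icc (0:ℝ) L)) +
        (sSup ((fun x => |deriv (φ n) x|) '' Set.Icc (0:ℝ) L)))
      Filter.atTop (nhds 0)) :
    ∃ s : ℕ → ℝ, (∀ n, s n = 1 ∨ s n = -1) ∧
      Filter.Tendsto
        (fun n => ∫ x in (0:ℝ)..L,
          (s n * φ n x / Real.sqrt (∫ y in (0:ℝ)..L, (φ n y) ^ 2) -
            Real.sqrt (2 / L) * Real.sin ((k : ℝ) * Real.pi * x / L)) ^ 2)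
        Filter.atTop (nhds 0) :=
  stmt_2_general ℏ m lam L g hℏ hm hL k hk β hβ φ hsol hC1 hne hsmall
end

section
/- Let g > 0, let a < b be real numbers, and let φ be a GP solution on [a,b] with parameter β that is continuously differentiable on [a,b] and not identically zero on [a,b]. Then ℏλ − β > (ℏ²/(4m))·(π/(b − a))². In particular, as b − a → 0 one must have β → −∞, so no nonzero solution can be supported on an arbitrarily short subinterval for bounded β. (Quantitative form of Case 3 in the proof that distinct bifurcated branches do not intersect.) -/
open Set MeasureTheory intervalIntegral Filter Topology

/-!
Multiplying the equation by `φ` and integrating by parts gives the energy identity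
`(β - ℏλ) ∫ φ² + g ∫ φ⁴ + (ℏ²/(4m)) ∫ φ'² = 0`. Since `φ` vanishes at both ends, Wirtinger's
inequality gives `∫ φ'² ≥ (π/(b-a))² ∫ φ²`, and `g ∫ φ⁴ > 0` because `φ ≢ 0`; together these
force `ℏλ - β > (ℏ²/(4m)) (π/(b-a))²`.

Wirtinger's inequality comes from a Picone-type identity: with `k = π/(b-a)` and
`w x = k cot (k (x - a))`, which solves the Riccati equation `w' = -k² - w²`,
`(w φ²)' = φ'² - k² φ² - (φ' - w φ)²` on `(a, b)`, and `w φ² → 0` at both ends since `φ`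
vanishes there to first order while `w` has simple poles.
-/

section Wirtinger

open Real

theorem continuousWithinAt_cot_mul_sq {f : ℝ → ℝ} {f' c k : ℝ} {s : Set ℝ} (hk : k ≠ 0)
    (hf : HasDerivWithinAt f f' s c) (hc : f c = 0) :
    ContinuousWithinAt (fun x => k * cot (k * (x - c)) * f x ^ 2) s c := by
  rw [← continuousWithinAt_sdiff_self, ContinuousWithinAt, hc, zero_pow two_ne_zero, mul_zero]
  have hsin : Tendsto (fun x => sin (k * (x - c)) / (x - c)) (𝓝[s \ {c}] c) (𝓝 k) := by
    have h := ((((hasDerivAt_id c).sub_const c).const_mul k).sin).tendsto_slope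
    simp only [id, sub_self, mul_zero, cos_zero, one_mul, mul_one] at h
    refine (h.mono_left (nhdsWithin_mono _ fun x hx => hx.2)).congr fun x => ?_
    simp [slope_def_field]
  have hslope : Tendsto (fun x => f x / (x - c)) (𝓝[s \ {c}] c) (𝓝 f') := by
    refine (hasDerivWithinAt_iff_tendsto_slope.mp hf).congr fun x => ?_
    simp [slope_def_field, hc]
  have hf0 : Tendsto f (𝓝[s \ {c}] c) (𝓝 0) :=
    hc ▸ (hf.continuousWithinAt.mono sdiff_subset).tendsto
  have hcos : Tendsto (fun x => cos (k * (x - c))) (𝓝[s \ {c}] c) (𝓝 1) := by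
    simpa using ((by fun_prop : Continuous fun x => cos (k * (x - c))).tendsto c).mono_left
      nhdsWithin_le_nhds
  have h := (hcos.mul ((tendsto_const_nhds (x := k)).div hsin hk)).mul (hf0.mul hslope)
  rw [zero_mul, mul_zero] at h
  refine h.congr' (eventually_nhdsWithin_of_forall fun x hx => ?_)
  have hxc : x - c ≠ 0 := sub_ne_zero.mpr hx.2
  simp only [Pi.div_apply, cot_eq_cos_div_sin]
  field_simp

theorem hasDerivAt_mul_cot {k c x : ℝ} (hx : sin (k * (x - c)) ≠ 0) :
    HasDerivAt (fun y => k * cot (k * (y - c))) (-k ^ 2 - (k * cot (k * (x - c))) ^ 2) x := by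
  have hu : HasDerivAt (fun y => k * (y - c)) k x := by
    simpa using ((hasDerivAt_id x).sub_const c).const_mul k
  simp only [cot_eq_cos_div_sin, ← mul_div_assoc]
  refine ((hu.cos.const_mul k).div hu.sin hx).congr_deriv ?_
  field_simp

theorem wirtinger_inequality {a b : ℝ} (hab : a < b) {φ ψ : ℝ → ℝ}
    (hφ : ∀ x ∈ Icc a b, HasDerivWithinAt φ (ψ x) (Icc a b) x) (hψ : ContinuousOn ψ (Icc a b))
    (ha : φ a = 0) (hb : φ b = 0) :
    (π / (b - a)) ^ 2 * ∫ x in a..b, φ x ^ 2 ≤ ∫ x in a..b, ψ x ^ 2 := by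
  set k := π / (b - a)
  have hk : k * (b - a) = π := div_mul_cancel₀ _ (sub_pos.mpr hab).ne'
  have hkpos : 0 < k := div_pos pi_pos (sub_pos.mpr hab)
  have hφc : ContinuousOn φ (Icc a b) := fun x hx => (hφ x hx).continuousWithinAt
  set w : ℝ → ℝ := fun x => k * cot (k * (x - a))
  -- `cot` has period `π = k (b - a)`, so `w` is also the cotangent centred at `b`
  have hw : w = fun x => k * cot (k * (x - b)) := by
    funext x
    have : k * (x - a) = k * (x - b) + π := by rw [← hk]; ring
    simp only [w, cot_eq_cos_div_sin, this, cos_add_pi, sin_add_pi, neg_div_neg_eq]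
  have hsin : ∀ x ∈ Ioo a b, sin (k * (x - a)) ≠ 0 := by
    intro x hx
    have hkx : k * (x - a) < k * (b - a) := mul_lt_mul_of_pos_left (by linarith [hx.2]) hkpos
    exact (sin_pos_of_pos_of_lt_pi (mul_pos hkpos (sub_pos.mpr hx.1)) (hk ▸ hkx)).ne'
  have hF' : ∀ x ∈ Ioo a b, HasDerivAt (fun y => w y * φ y ^ 2)
      ((-k ^ 2 - w x ^ 2) * φ x ^ 2 + w x * (2 * φ x * ψ x)) x := by
    intro x hx
    have hφx := (hφ x (Ioo_subset_Icc_self hx)).hasDerivAt (Icc_mem_nhds hx.1 hx.2)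
    refine ((hasDerivAt_mul_cot (hsin x hx)).mul (hφx.pow 2)).congr_deriv ?_
    simp only [w, Pi.pow_apply]
    ring
  have hFc : ContinuousOn (fun y => w y * φ y ^ 2) (Icc a b) := by
    intro x hx
    rcases eq_endpoints_or_mem_Ioo_of_mem_Icc hx with rfl | rfl | hx'
    · exact continuousWithinAt_cot_mul_sq hkpos.ne' (hφ x hx) ha
    · rw [hw]; exact continuousWithinAt_cot_mul_sq hkpos.ne' (hφ x hx) hb
    · exact (hF' x hx').continuousAt.continuousWithinAt
  have key := sub_le_integral_of_hasDeriv_right_of_le hab.le hFc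
    (fun x hx => (hF' x hx).hasDerivWithinAt)
    (((hψ.pow 2).sub (continuousOn_const.mul (hφc.pow 2))).integrableOn_Icc
      (f := fun x => ψ x ^ 2 - k ^ 2 * φ x ^ 2))
    (fun x _ => by nlinarith [sq_nonneg (ψ x - w x * φ x)])
  simp only [ha, hb, zero_pow two_ne_zero, mul_zero, sub_zero] at key
  rw [integral_sub (f := fun x => ψ x ^ 2) (g := fun x => k ^ 2 * φ x ^ 2)
    ((hψ.pow 2).intervalIntegrable_of_Icc hab.le)
    (((hφc.pow 2).intervalIntegrable_of_Icc hab.le).const_mul _),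
    intervalIntegral.integral_const_mul] at key
  linarith

end Wirtinger

theorem integral_energy_eq_zero {C μ g a b : ℝ} (hab : a ≤ b) {φ ψ χ : ℝ → ℝ}
    (hφ : ContinuousOn φ (Icc a b)) (hψ : ContinuousOn ψ (Icc a b))
    (hφ' : ∀ x ∈ Ioo a b, HasDerivAt φ (ψ x) x) (hψ' : ∀ x ∈ Ioo a b, HasDerivAt ψ (χ x) x)
    (hode : ∀ x ∈ Ioo a b, -C * χ x + μ * φ x + g * φ x ^ 3 = 0)
    (ha : φ a = 0) (hb : φ b = 0) :
    μ * (∫ x in a..b, φ x ^ 2) + g * (∫ x in a..b, φ x ^ 4) + C * ∫ x in a..b, ψ x ^ 2 = 0 := by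
  have hint : ∀ {f : ℝ → ℝ}, ContinuousOn f (Icc a b) → IntervalIntegrable f volume a b :=
    fun hf => hf.intervalIntegrable_of_Icc hab
  have hφ2 := continuousOn_const (c := μ) |>.mul (hφ.pow 2)
  have hφ4 := continuousOn_const (c := g) |>.mul (hφ.pow 4)
  have hψ2 := continuousOn_const (c := C) |>.mul (hψ.pow 2)
  have h := integral_eq_sub_of_hasDeriv_right_of_le hab
    (continuousOn_const.mul (hψ.mul hφ)) (f := fun x => C * (ψ x * φ x))
    (f' := fun x => μ * φ x ^ 2 + g * φ x ^ 4 + C * ψ x ^ 2)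
    (fun x hx => (((hψ' x hx).mul (hφ' x hx)).const_mul C).hasDerivWithinAt.congr_deriv
      (by linear_combination -φ x * hode x hx))
    (hint ((hφ2.add hφ4).add hψ2))
  rw [integral_add (f := fun x => μ * φ x ^ 2 + g * φ x ^ 4) (g := fun x => C * ψ x ^ 2)
      (hint (hφ2.add hφ4)) (hint hψ2),
    integral_add (f := fun x => μ * φ x ^ 2) (g := fun x => g * φ x ^ 4) (hint hφ2) (hint hφ4),
    intervalIntegral.integral_const_mul, intervalIntegral.integral_const_mul,
    intervalIntegral.integral_const_mul, ha, hb] at h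
  simpa using h

theorem hasDerivAt_derivWithin_Icc {φ : ℝ → ℝ} {a b x : ℝ} (hφ : ContDiffOn ℝ 2 φ (Ioo a b))
    (hx : x ∈ Ioo a b) : HasDerivAt (derivWithin φ (Icc a b)) (deriv (deriv φ) x) x := by
  have hdiff : DifferentiableAt ℝ (deriv φ) x :=
    ((hφ.deriv_of_isOpen isOpen_Ioo (by norm_num)).differentiableOn one_ne_zero x
      hx).differentiableAt (isOpen_Ioo.mem_nhds hx)
  refine hdiff.hasDerivAt.congr_of_eventuallyEq ?_
  filter_upwards [isOpen_Ioo.mem_nhds hx] with y hy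
  exact derivWithin_of_mem_nhds (Icc_mem_nhds hy.1 hy.2)

theorem stmt_5_general (ℏ m lam g : ℝ) (hm : 0 < m) (hg : 0 < g)
    (a b β : ℝ) (hab : a < b) (φ : ℝ → ℝ)
    (hsol : IsGPSolution ℏ m lam g a b β φ)
    (hC1 : ContDiffOn ℝ 1 φ (Set.Icc a b))
    (hne : ∃ x ∈ Set.Icc a b, φ x ≠ 0) :
    ℏ * lam - β > ℏ ^ 2 / (4 * m) * (Real.pi / (b - a)) ^ 2 := by
  obtain ⟨hφc, hφ2, hode, ha, hb⟩ := hsol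
  obtain ⟨x₀, hx₀, hφx₀⟩ := hne
  set ψ := derivWithin φ (Icc a b)
  have hφ' : ∀ x ∈ Icc a b, HasDerivWithinAt φ (ψ x) (Icc a b) x := fun x hx =>
    (hC1.differentiableOn one_ne_zero x hx).hasDerivWithinAt
  have hψc : ContinuousOn ψ (Icc a b) :=
    hC1.continuousOn_derivWithin (uniqueDiffOn_Icc hab) le_rfl
  have henergy := integral_energy_eq_zero hab.le hφc hψc
    (fun x hx => (hφ' x (Ioo_subset_Icc_self hx)).hasDerivAt (Icc_mem_nhds hx.1 hx.2))
    (fun x hx => hasDerivAt_derivWithin_Icc hφ2 hx) hode ha hb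
  have hwirt := wirtinger_inequality hab hφ' hψc ha hb
  have hI2 : 0 ≤ ∫ x in a..b, φ x ^ 2 := integral_nonneg hab.le fun x _ => sq_nonneg _
  have hI4 : 0 < ∫ x in a..b, φ x ^ 4 :=
    integral_pos hab (hφc.pow 4) (fun x _ => by positivity) ⟨x₀, hx₀, by positivity⟩
  have hC : 0 ≤ ℏ ^ 2 / (4 * m) := by positivity
  have key : ℏ ^ 2 / (4 * m) * (Real.pi / (b - a)) ^ 2 * ∫ x in a..b, φ x ^ 2
      < (ℏ * lam - β) * ∫ x in a..b, φ x ^ 2 := by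
    linarith [mul_le_mul_of_nonneg_left hwirt hC, mul_pos hg hI4]
  exact lt_of_mul_lt_mul_right key hI2

/-- a nonzero stationary state on `[a,b]` in the repulsive case forces
`ℏλ - β > (ℏ²/(4m))·(π/(b-a))²`; no nonzero solution on arbitrarily short
intervals for bounded `β`. -/
theorem stmt_5 (ℏ m lam g : ℝ) (hℏ : 0 < ℏ) (hm : 0 < m) (hg : 0 < g)
    (a b β : ℝ) (hab : a < b) (φ : ℝ → ℝ)
    (hsol : IsGPSolution ℏ m lam g a b β φ)
    (hC1 : ContDiffOn ℝ 1 φ (Set.Icc a b))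
    (hne : ∃ x ∈ Set.Icc a b, φ x ≠ 0) :
    ℏ * lam - β > ℏ ^ 2 / (4 * m) * (Real.pi / (b - a)) ^ 2 :=
  stmt_5_general ℏ m lam g hm hg a b β hab φ hsol hC1 hne
end

section
/- Let g, β ∈ ℝ, let a < b, and let φ be a GP solution on [a,b] with parameter β such that φ(x) ≤ 0 for all x ∈ [a,b] and φ is not identically zero on [a,b]. Then φ(x) < 0 for all x ∈ (a,b). (Strong maximum principle step, Case 1, in the proof that two bifurcated branches do not intersect: a nonpositive nontrivial stationary state cannot vanish at an interior point.) -/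
open Set MeasureTheory intervalIntegral Filter Topology

section

variable {E : Type*} [NormedAddCommGroup E] [NormedSpace ℝ E]

theorem ODE_solution_unique_of_locallyLipschitz {v : E → E} (hv : LocallyLipschitz v)
    {f g : ℝ → E} {a b t₀ : ℝ} (ht₀ : t₀ ∈ Ioo a b)
    (hf : ∀ t ∈ Ioo a b, HasDerivAt f (v (f t)) t)
    (hg : ∀ t ∈ Ioo a b, HasDerivAt g (v (g t)) t) (heq : f t₀ = g t₀) :
    EqOn f g (Ioo a b) := by
  intro t ht
  obtain ⟨a', ha', ha't⟩ := exists_between (lt_min ht.1 ht₀.1)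
  obtain ⟨b', hb't, hb'⟩ := exists_between (max_lt ht.2 ht₀.2)
  have hJ : Icc a' b' ⊆ Ioo a b := Icc_subset_Ioo ha' hb'
  set K := f '' Icc a' b' ∪ g '' Icc a' b'
  have hK : IsCompact K :=
    (isCompact_Icc.image_of_continuousOn fun s hs ↦
        (hf s (hJ hs)).continuousAt.continuousWithinAt).union
      (isCompact_Icc.image_of_continuousOn fun s hs ↦
        (hg s (hJ hs)).continuousAt.continuousWithinAt)
  obtain ⟨L, hL⟩ := hv.locallyLipschitzOn.exists_lipschitzOnWith_of_compact hK
  refine ODE_solution_unique_of_mem_Ioo (v := fun _ ↦ v) (s := fun _ ↦ K) (fun _ _ ↦ hL)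
    ⟨(min_le_right _ _).trans_lt' ha't, (le_max_right _ _).trans_lt hb't⟩ ?_ ?_ heq
    ⟨(min_le_left _ _).trans_lt' ha't, (le_max_left _ _).trans_lt hb't⟩
  · exact fun s hs ↦
      ⟨hf s (hJ (Ioo_subset_Icc_self hs)), .inl (mem_image_of_mem f (Ioo_subset_Icc_self hs))⟩
  · exact fun s hs ↦
      ⟨hg s (hJ (Ioo_subset_Icc_self hs)), .inr (mem_image_of_mem g (Ioo_subset_Icc_self hs))⟩

theorem eqOn_zero_of_secondOrder_ODE {F : E → E} (hF : LocallyLipschitz F) (hF0 : F 0 = 0)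
    {u u' : ℝ → E} {a b t₀ : ℝ} (ht₀ : t₀ ∈ Ioo a b)
    (hu : ∀ t ∈ Ioo a b, HasDerivAt u (u' t) t)
    (hu' : ∀ t ∈ Ioo a b, HasDerivAt u' (F (u t)) t) (h0 : u t₀ = 0) (h0' : u' t₀ = 0) :
    EqOn u 0 (Ioo a b) := by
  have hv : LocallyLipschitz fun p : E × E ↦ (p.2, F p.1) :=
    LipschitzWith.prod_snd.locallyLipschitz.prodMk
      (hF.comp LipschitzWith.prod_fst.locallyLipschitz)
  have h := ODE_solution_unique_of_locallyLipschitz hv ht₀ (f := fun t ↦ (u t, u' t))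
    (g := fun _ ↦ 0) (fun t ht ↦ (hu t ht).prodMk (hu' t ht))
    (fun t _ ↦ by simpa [hF0, Prod.mk_zero_zero] using hasDerivAt_const t (0 : E × E))
    (by simp [h0, h0'])
  exact fun t ht ↦ congrArg Prod.fst (h ht)

theorem ContDiffOn.hasDerivAt_deriv_deriv {f : ℝ → E} {s : Set ℝ} (hs : IsOpen s)
    (hf : ContDiffOn ℝ 2 f s) {x : ℝ} (hx : x ∈ s) :
    HasDerivAt (deriv f) (deriv (deriv f) x) x :=
  (((hf.deriv_of_isOpen hs (m := 1) (by norm_num)).differentiableOn one_ne_zero).differentiableAt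
    (hs.mem_nhds hx)).hasDerivAt

end

namespace IsGPSolution

variable {ℏ m lam g a b β : ℝ} {φ : ℝ → ℝ}

theorem deriv_deriv_eq (hsol : IsGPSolution ℏ m lam g a b β φ) (hℏ : ℏ ≠ 0) (hm : m ≠ 0)
    {x : ℝ} (hx : x ∈ Ioo a b) :
    deriv (deriv φ) x = 4 * m / ℏ ^ 2 * ((β - ℏ * lam) * φ x + g * φ x ^ 3) := by
  have h := hsol.2.2.1 x hx
  field_simp at h ⊢
  linarith

theorem eqOn_zero_of_deriv_eq_zero (hsol : IsGPSolution ℏ m lam g a b β φ) (hℏ : ℏ ≠ 0)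
    (hm : m ≠ 0) {x₀ : ℝ} (hx₀ : x₀ ∈ Ioo a b) (h0 : φ x₀ = 0) (h0' : deriv φ x₀ = 0) :
    EqOn φ 0 (Icc a b) := by
  have hφ'' := fun x (hx : x ∈ Ioo a b) ↦ hsol.deriv_deriv_eq hℏ hm hx
  obtain ⟨-, hC2, -, ha, hb⟩ := hsol
  have hF : LocallyLipschitz fun y : ℝ ↦ 4 * m / ℏ ^ 2 * ((β - ℏ * lam) * y + g * y ^ 3) :=
    ContDiff.locallyLipschitz (by fun_prop)
  have hzero := eqOn_zero_of_secondOrder_ODE hF (by simp) hx₀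
    (fun x hx ↦ ((hC2.differentiableOn (by norm_num)).differentiableAt
      (isOpen_Ioo.mem_nhds hx)).hasDerivAt)
    (fun x hx ↦ hφ'' x hx ▸ hC2.hasDerivAt_deriv_deriv isOpen_Ioo hx) h0 h0'
  intro x hx
  rcases eq_endpoints_or_mem_Ioo_of_mem_Icc hx with rfl | rfl | hx
  · exact ha
  · exact hb
  · exact hzero hx

end IsGPSolution

theorem stmt_8_general (ℏ m lam g : ℝ) (hℏ : 0 < ℏ) (hm : 0 < m)
    (a b β : ℝ) (φ : ℝ → ℝ)
    (hsol : IsGPSolution ℏ m lam g a b β φ)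
    (hnonpos : ∀ x ∈ Set.Icc a b, φ x ≤ 0)
    (hne : ∃ x ∈ Set.Icc a b, φ x ≠ 0) :
    ∀ x ∈ Set.Ioo a b, φ x < 0 := by
  intro x₀ hx₀
  by_contra! hx₀_nonneg
  have h0 : φ x₀ = 0 := le_antisymm (hnonpos x₀ (Ioo_subset_Icc_self hx₀)) hx₀_nonneg
  have hmax : IsLocalMax φ x₀ := by
    filter_upwards [isOpen_Ioo.mem_nhds hx₀] with y hy
    exact h0 ▸ hnonpos y (Ioo_subset_Icc_self hy)
  have hzero := hsol.eqOn_zero_of_deriv_eq_zero hℏ.ne' hm.ne' hx₀ h0 hmax.deriv_eq_zero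
  obtain ⟨x, hx, hx_ne⟩ := hne
  exact hx_ne (hzero hx)

/-- strong maximum principle step (Case 1): a nonpositive nontrivial
stationary state cannot vanish at an interior point. -/
theorem stmt_8 (ℏ m lam g : ℝ) (hℏ : 0 < ℏ) (hm : 0 < m)
    (a b β : ℝ) (hab : a < b) (φ : ℝ → ℝ)
    (hsol : IsGPSolution ℏ m lam g a b β φ)
    (hnonpos : ∀ x ∈ Set.Icc a b, φ x ≤ 0)
    (hne : ∃ x ∈ Set.Icc a b, φ x ≠ 0) :
    ∀ x ∈ Set.Ioo a b, φ x < 0 :=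
  stmt_8_general ℏ m lam g hℏ hm a b β φ hsol hnonpos hne
end

section
/- Let g, β ∈ ℝ and let φ be a GP solution on [0,L] with parameter β. If there exists a nonempty open subinterval (c,d) ⊆ (0,L) with φ(x) = 0 for all x ∈ (c,d), then φ(x) = 0 for all x ∈ [0,L]. (Case 2 in the proof that two bifurcated branches do not intersect: a nontrivial stationary state cannot vanish on a set of positive length.) -/
open Set MeasureTheory intervalIntegral Filter Topology

/-!
The GP equation is the autonomous second-order ODE `φ'' = f(φ)` with the cubic
`f y = (4m/ℏ²)((β - ℏλ) y + g y³)`, which is `C¹` and vanishes at `0`. In phase space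
`(φ, φ')` this is a first-order system whose vector field is locally Lipschitz near the
origin, so by uniqueness a solution with `φ(x₀) = φ'(x₀) = 0` vanishes near `x₀`.
Hence the set of points near which `φ` vanishes is open, and it is also closed in
`(0,L)` because `φ` and `φ'` are continuous there. By connectedness it is all of
`(0,L)` once it contains a point of `(c,d)`.
-/

section SecondOrderAutonomous

variable {f φ : ℝ → ℝ} {s : Set ℝ}

theorem hasDerivAt_phase (hs : IsOpen s) (hφ : ContDiffOn ℝ 2 φ s)
    (hode : ∀ x ∈ s, deriv (deriv φ) x = f (φ x)) {x : ℝ} (hx : x ∈ s) :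
    HasDerivAt (fun t => (φ t, deriv φ t)) (deriv φ x, f (φ x)) x := by
  have hφ' : ContDiffOn ℝ 1 (deriv φ) s := hφ.deriv_of_isOpen hs (by norm_num)
  have h1 : HasDerivAt φ (deriv φ x) x :=
    ((hφ.differentiableOn two_ne_zero).differentiableAt (hs.mem_nhds hx)).hasDerivAt
  have h2 : HasDerivAt (deriv φ) (deriv (deriv φ) x) x :=
    ((hφ'.differentiableOn one_ne_zero).differentiableAt (hs.mem_nhds hx)).hasDerivAt
  simpa only [hode x hx] using h1.prodMk h2

theorem eventually_eq_zero_of_deriv_deriv_eq_comp (hf : ContDiffAt ℝ 1 f 0)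
    (hf0 : f 0 = 0) (hs : IsOpen s) (hφ : ContDiffOn ℝ 2 φ s)
    (hode : ∀ x ∈ s, deriv (deriv φ) x = f (φ x))
    {x₀ : ℝ} (hx₀ : x₀ ∈ s) (h0 : φ x₀ = 0) (h0' : deriv φ x₀ = 0) :
    ∀ᶠ x in 𝓝 x₀, φ x = 0 := by
  set v : ℝ × ℝ → ℝ × ℝ := fun p => (p.2, f p.1)
  set F : ℝ → ℝ × ℝ := fun t => (φ t, deriv φ t)
  have hv : ContDiffAt ℝ 1 v 0 := contDiffAt_snd.prodMk (hf.comp (0 : ℝ × ℝ) contDiffAt_fst)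
  obtain ⟨K, t, ht, hlip⟩ := hv.exists_lipschitzOnWith
  have hF : ∀ x ∈ s, HasDerivAt F (v (F x)) x := fun x hx => hasDerivAt_phase hs hφ hode hx
  have hF0 : F x₀ = 0 := Prod.ext h0 h0'
  have hFt : ∀ᶠ x in 𝓝 x₀, F x ∈ t :=
    (hF x₀ hx₀).continuousAt.eventually_mem (hF0 ▸ ht)
  have hsol : ∀ᶠ x in 𝓝 x₀, HasDerivAt F (v (F x)) x ∧ F x ∈ t := by
    filter_upwards [hs.eventually_mem hx₀, hFt] with x hx hxt using ⟨hF x hx, hxt⟩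
  have hzero :
      ∀ᶠ x in 𝓝 x₀, HasDerivAt (fun _ => (0 : ℝ × ℝ)) (v 0) x ∧ (0 : ℝ × ℝ) ∈ t := by
    have hv0 : v 0 = 0 := Prod.ext rfl hf0
    exact .of_forall fun x => ⟨by rw [hv0]; exact hasDerivAt_const x _, mem_of_mem_nhds ht⟩
  filter_upwards [ODE_solution_unique_of_eventually (K := K) (.of_forall fun _ => hlip)
    hsol hzero hF0] with x hx using congrArg Prod.fst hx

theorem eqOn_zero_of_deriv_deriv_eq_comp (hf : ContDiffAt ℝ 1 f 0) (hf0 : f 0 = 0)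
    (hs : IsOpen s) (hs' : IsPreconnected s) (hφ : ContDiffOn ℝ 2 φ s)
    (hode : ∀ x ∈ s, deriv (deriv φ) x = f (φ x)) {x₀ : ℝ} (hx₀ : x₀ ∈ s)
    (hvanish : ∀ᶠ x in 𝓝 x₀, φ x = 0) : EqOn φ 0 s := by
  set U : Set ℝ := {x | ∀ᶠ y in 𝓝 x, φ y = 0}
  set F : ℝ → ℝ × ℝ := fun t => (φ t, deriv φ t)
  have hFU : F '' U ⊆ {0} := by
    rintro _ ⟨y, hy, rfl⟩
    have hy : φ =ᶠ[𝓝 y] fun _ => 0 := hy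
    exact Prod.ext hy.self_of_nhds (hy.deriv_eq.trans (deriv_const y 0))
  have hclosed : closure U ∩ s ⊆ U := by
    rintro x ⟨hxU, hxs⟩
    have hFx : F x ∈ closure (F '' U) :=
      mem_closure_image (hasDerivAt_phase hs hφ hode hxs).continuousAt hxU
    have hFx0 : F x = 0 := by simpa using closure_mono hFU hFx
    exact eventually_eq_zero_of_deriv_deriv_eq_comp hf hf0 hs hφ hode hxs
      (congrArg Prod.fst hFx0) (congrArg Prod.snd hFx0)
  have hsU : s ⊆ U := hs'.subset_of_closure_inter_subset isOpen_setOfPred_eventually_nhds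
    ⟨x₀, hx₀, hvanish⟩ hclosed
  exact fun x hx => (hsU hx).self_of_nhds

end SecondOrderAutonomous

theorem IsGPSolution.deriv_deriv_eq_s9 {ℏ m lam g a b β : ℝ} {φ : ℝ → ℝ} (hℏ : ℏ ≠ 0)
    (hm : m ≠ 0) (hsol : IsGPSolution ℏ m lam g a b β φ) {x : ℝ} (hx : x ∈ Ioo a b) :
    deriv (deriv φ) x = 4 * m / ℏ ^ 2 * ((β - ℏ * lam) * φ x + g * φ x ^ 3) := by
  have h := hsol.2.2.1 x hx
  field_simp at h ⊢
  linarith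

theorem stmt_9_general (ℏ m lam L g : ℝ) (hℏ : 0 < ℏ) (hm : 0 < m)
    (β : ℝ) (φ : ℝ → ℝ)
    (hsol : IsGPSolution ℏ m lam g 0 L β φ)
    (c d : ℝ) (hcd : c < d) (hsub : Set.Ioo c d ⊆ Set.Ioo (0:ℝ) L)
    (hvanish : ∀ x ∈ Set.Ioo c d, φ x = 0) :
    ∀ x ∈ Set.Icc (0:ℝ) L, φ x = 0 := by
  have hmid : (c + d) / 2 ∈ Ioo c d := ⟨by linarith, by linarith⟩
  have hinterior : EqOn φ 0 (Ioo 0 L) :=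
    eqOn_zero_of_deriv_deriv_eq_comp
      (f := fun y => 4 * m / ℏ ^ 2 * ((β - ℏ * lam) * y + g * y ^ 3)) (by fun_prop) (by simp)
      isOpen_Ioo isPreconnected_Ioo hsol.2.1
      (fun x hx => hsol.deriv_deriv_eq_s9 hℏ.ne' hm.ne' hx) (hsub hmid)
      (eventually_of_mem (isOpen_Ioo.mem_nhds hmid) hvanish)
  intro x hx
  rcases hx.1.eq_or_lt with rfl | h0
  · exact hsol.2.2.2.1
  rcases hx.2.eq_or_lt with rfl | hL
  · exact hsol.2.2.2.2
  exact hinterior ⟨h0, hL⟩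

/-- Case 2: a stationary state that vanishes on a nonempty open
subinterval of `(0,L)` vanishes identically on `[0,L]`. -/
theorem stmt_9 (ℏ m lam L g : ℝ) (hℏ : 0 < ℏ) (hm : 0 < m) (hL : 0 < L)
    (β : ℝ) (φ : ℝ → ℝ)
    (hsol : IsGPSolution ℏ m lam g 0 L β φ)
    (c d : ℝ) (hcd : c < d) (hsub : Set.Ioo c d ⊆ Set.Ioo (0:ℝ) L)
    (hvanish : ∀ x ∈ Set.Ioo c d, φ x = 0) :
    ∀ x ∈ Set.Icc (0:ℝ) L, φ x = 0 :=
  stmt_9_general ℏ m lam L g hℏ hm β φ hsol c d hcd hsub hvanish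
end

section
/- Let g > 0, let β ∈ ℝ, and let φ be a GP solution on [0,L] with parameter β that is continuously differentiable on [0,L]. Then g·∫₀^L φ(x)⁴ dx ≤ (ℏλ − β)·∫₀^L φ(x)² dx and (ℏ²/(4m))·∫₀^L φ'(x)² dx ≤ (ℏλ − β)·∫₀^L φ(x)² dx; consequently ∫₀^L φ(x)⁴ dx ≤ L·(max(ℏλ − β, 0))²/g². In particular, for β ranging in any bounded set the solutions stay bounded in L⁴, so there is no value β₀ at which the bifurcated solutions blow up. (A priori bound used in the proof of Theorem 4.2(2).) -/
/-!
Multiplying the equation by `φ` and integrating by parts (the boundary terms vanish since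
`φ(0) = φ(L) = 0`) gives the energy identity
`(ℏ²/(4m)) ∫ φ'² + (β - ℏλ) ∫ φ² + g ∫ φ⁴ = 0`.
Both `(ℏ²/(4m)) ∫ φ'²` and `g ∫ φ⁴` are nonnegative, so each is at most `(ℏλ - β) ∫ φ²`.
Combined with Cauchy–Schwarz, `(∫ φ²)² ≤ L ∫ φ⁴`, this gives `g² (∫ φ⁴)² ≤ L (ℏλ - β)₊² ∫ φ⁴`.
-/

open Set MeasureTheory intervalIntegral Filter Topology

theorem sq_intervalIntegral_le_mul_integral_sq {a b : ℝ} {f : ℝ → ℝ} (hab : a ≤ b)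
    (hf : IntervalIntegrable f volume a b)
    (hf2 : IntervalIntegrable (fun x => f x ^ 2) volume a b) :
    (∫ x in a..b, f x) ^ 2 ≤ (b - a) * ∫ x in a..b, f x ^ 2 := by
  rcases hab.eq_or_lt with rfl | hlt
  · simp
  set I := ∫ x in a..b, f x
  have hexpand : (∫ x in a..b, ((b - a) * f x - I) ^ 2)
      = (b - a) * ((b - a) * (∫ x in a..b, f x ^ 2) - I ^ 2) := by
    have hsq : ∀ x, ((b - a) * f x - I) ^ 2
        = (b - a) ^ 2 * f x ^ 2 - 2 * (b - a) * I * f x + I ^ 2 := fun x => by ring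
    simp_rw [hsq]
    rw [integral_add ((hf2.const_mul _).sub (hf.const_mul _)) intervalIntegrable_const,
      integral_sub (hf2.const_mul _) (hf.const_mul _), intervalIntegral.integral_const_mul,
      intervalIntegral.integral_const_mul, intervalIntegral.integral_const, smul_eq_mul]
    ring
  have hnonneg : 0 ≤ (b - a) * ((b - a) * (∫ x in a..b, f x ^ 2) - I ^ 2) :=
    hexpand ▸ integral_nonneg hab fun x _ => sq_nonneg _
  nlinarith [(mul_nonneg_iff_of_pos_left (sub_pos.2 hlt)).1 hnonneg]

theorem le_mul_sq_div_sq_of_mul_le {g A L x y : ℝ} (hg : 0 < g) (hL : 0 ≤ L) (hx : 0 ≤ x)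
    (hy : 0 ≤ y) (hxy : g * x ≤ A * y) (hyx : y ^ 2 ≤ L * x) :
    x ≤ L * max A 0 ^ 2 / g ^ 2 := by
  set M := max A 0
  have hM : 0 ≤ M := le_max_right _ _
  have hgxM : g * x ≤ M * y := hxy.trans (mul_le_mul_of_nonneg_right (le_max_left _ _) hy)
  rw [le_div_iff₀ (by positivity)]
  rcases hx.eq_or_lt with rfl | hxpos
  · rw [zero_mul]
    positivity
  have hsq : (g * x) ^ 2 ≤ M ^ 2 * (L * x) :=
    calc (g * x) ^ 2 ≤ (M * y) ^ 2 := pow_le_pow_left₀ (by positivity) hgxM 2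
      _ = M ^ 2 * y ^ 2 := by ring
      _ ≤ M ^ 2 * (L * x) := mul_le_mul_of_nonneg_left hyx (sq_nonneg M)
  nlinarith

namespace IsGPSolution

variable {ℏ m lam g a b β : ℝ} {φ : ℝ → ℝ}

theorem intervalIntegrable_pow (hsol : IsGPSolution ℏ m lam g a b β φ) (hab : a ≤ b) (n : ℕ) :
    IntervalIntegrable (fun x => φ x ^ n) volume a b :=
  (hsol.1.pow n).intervalIntegrable_of_Icc hab

theorem hasDerivAt_mul_deriv (hsol : IsGPSolution ℏ m lam g a b β φ) {x : ℝ} (hx : x ∈ Ioo a b) :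
    HasDerivAt (fun y => ℏ ^ 2 / (4 * m) * (φ y * deriv φ y))
      (ℏ ^ 2 / (4 * m) * deriv φ x ^ 2 + (β - ℏ * lam) * φ x ^ 2 + g * φ x ^ 4) x := by
  obtain ⟨-, hC2, hode, -, -⟩ := hsol
  have hφ : HasDerivAt φ (deriv φ x) x :=
    ((hC2.differentiableOn two_ne_zero x hx).differentiableAt (isOpen_Ioo.mem_nhds hx)).hasDerivAt
  have hφ' : HasDerivAt (deriv φ) (deriv (deriv φ) x) x :=
    (((hC2.deriv_of_isOpen isOpen_Ioo (by norm_num)).differentiableOn one_ne_zero x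
      hx).differentiableAt (isOpen_Ioo.mem_nhds hx)).hasDerivAt
  exact ((hφ.mul hφ').const_mul _).congr_deriv (by linear_combination (-φ x) * hode x hx)

theorem energy_identity (hsol : IsGPSolution ℏ m lam g a b β φ) (hab : a < b)
    (hC1 : ContDiffOn ℝ 1 φ (Icc a b)) :
    ℏ ^ 2 / (4 * m) * (∫ x in a..b, deriv φ x ^ 2) + (β - ℏ * lam) * (∫ x in a..b, φ x ^ 2)
      + g * (∫ x in a..b, φ x ^ 4) = 0 := by
  set c := ℏ ^ 2 / (4 * m)
  -- `deriv φ` is junk at the endpoints; the one-sided derivative is continuous on `[a, b]`.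
  set ψ := derivWithin φ (Icc a b)
  have hψ : ContinuousOn ψ (Icc a b) := hC1.continuousOn_derivWithin (uniqueDiffOn_Icc hab) le_rfl
  have hψ_eq : EqOn ψ (deriv φ) (Ioo a b) := fun x hx =>
    derivWithin_of_mem_nhds (Icc_mem_nhds hx.1 hx.2)
  have hint := hsol.intervalIntegrable_pow hab.le
  have hintψ : IntervalIntegrable (fun x => ψ x ^ 2) volume a b :=
    (hψ.pow 2).intervalIntegrable_of_Icc hab.le
  have hFTC : (∫ x in a..b, c * ψ x ^ 2 + (β - ℏ * lam) * φ x ^ 2 + g * φ x ^ 4) = 0 := by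
    rw [integral_eq_sub_of_hasDerivAt_of_le hab.le
      (f := fun x => c * (φ x * ψ x)) (continuousOn_const.mul (hsol.1.mul hψ)) (fun x hx => ?_)
      (((hintψ.const_mul c).add ((hint 2).const_mul _)).add ((hint 4).const_mul g)),
      hsol.2.2.2.1, hsol.2.2.2.2]
    · ring
    · refine (hsol.hasDerivAt_mul_deriv hx).congr_of_eventuallyEq ?_ |>.congr_deriv ?_
      · filter_upwards [isOpen_Ioo.mem_nhds hx] with y hy
        rw [hψ_eq hy]
      · rw [hψ_eq hx]
  have hψ_sq : (∫ x in a..b, ψ x ^ 2) = ∫ x in a..b, deriv φ x ^ 2 :=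
    integral_congr_Ioo_of_le hab.le fun x hx => by simp only [hψ_eq hx]
  rwa [integral_add ((hintψ.const_mul c).add ((hint 2).const_mul _)) ((hint 4).const_mul g),
    integral_add (hintψ.const_mul c) ((hint 2).const_mul _), intervalIntegral.integral_const_mul,
    intervalIntegral.integral_const_mul, intervalIntegral.integral_const_mul, hψ_sq] at hFTC

end IsGPSolution

theorem stmt_10_general (ℏ m lam L g : ℝ) (hm : 0 < m) (hL : 0 < L)
    (hg : 0 < g) (β : ℝ) (φ : ℝ → ℝ)
    (hsol : IsGPSolution ℏ m lam g 0 L β φ)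
    (hC1 : ContDiffOn ℝ 1 φ (Set.Icc 0 L)) :
    g * (∫ x in (0:ℝ)..L, (φ x) ^ 4) ≤ (ℏ * lam - β) * ∫ x in (0:ℝ)..L, (φ x) ^ 2 ∧
    ℏ ^ 2 / (4 * m) * (∫ x in (0:ℝ)..L, (deriv φ x) ^ 2) ≤
      (ℏ * lam - β) * ∫ x in (0:ℝ)..L, (φ x) ^ 2 ∧
    (∫ x in (0:ℝ)..L, (φ x) ^ 4) ≤ L * (max (ℏ * lam - β) 0) ^ 2 / g ^ 2 := by
  have henergy := hsol.energy_identity hL hC1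
  have hc : 0 ≤ ℏ ^ 2 / (4 * m) := by positivity
  have hI2 : 0 ≤ ∫ x in (0:ℝ)..L, φ x ^ 2 := integral_nonneg hL.le fun x _ => by positivity
  have hI4 : 0 ≤ ∫ x in (0:ℝ)..L, φ x ^ 4 := integral_nonneg hL.le fun x _ => by positivity
  have hIφ' : 0 ≤ ∫ x in (0:ℝ)..L, deriv φ x ^ 2 := integral_nonneg hL.le fun x _ => sq_nonneg _
  have hbound4 : g * (∫ x in (0:ℝ)..L, φ x ^ 4) ≤ (ℏ * lam - β) * ∫ x in (0:ℝ)..L, φ x ^ 2 := by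
    linear_combination henergy + mul_nonneg hc hIφ'
  have hCS : (∫ x in (0:ℝ)..L, φ x ^ 2) ^ 2 ≤ L * ∫ x in (0:ℝ)..L, φ x ^ 4 := by
    have h4 : IntervalIntegrable (fun x => (φ x ^ 2) ^ 2) volume 0 L := by
      simpa [← pow_mul] using hsol.intervalIntegrable_pow hL.le 4
    simpa [← pow_mul] using sq_intervalIntegral_le_mul_integral_sq hL.le
      (hsol.intervalIntegrable_pow hL.le 2) h4
  refine ⟨hbound4, by linear_combination henergy + mul_nonneg hg.le hI4, ?_⟩
  exact le_mul_sq_div_sq_of_mul_le hg hL.le hI4 hI2 hbound4 hCS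

/-- a priori bounds for GP solutions in the repulsive case, used in
the proof of Theorem 4.2(2): no blow-up of bifurcated solutions at finite `β₀`. -/
theorem stmt_10 (ℏ m lam L g : ℝ) (hℏ : 0 < ℏ) (hm : 0 < m) (hL : 0 < L)
    (hg : 0 < g) (β : ℝ) (φ : ℝ → ℝ)
    (hsol : IsGPSolution ℏ m lam g 0 L β φ)
    (hC1 : ContDiffOn ℝ 1 φ (Set.Icc 0 L)) :
    g * (∫ x in (0:ℝ)..L, (φ x) ^ 4) ≤ (ℏ * lam - β) * ∫ x in (0:ℝ)..L, (φ x) ^ 2 ∧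
    ℏ ^ 2 / (4 * m) * (∫ x in (0:ℝ)..L, (deriv φ x) ^ 2) ≤
      (ℏ * lam - β) * ∫ x in (0:ℝ)..L, (φ x) ^ 2 ∧
    (∫ x in (0:ℝ)..L, (φ x) ^ 4) ≤ L * (max (ℏ * lam - β) 0) ^ 2 / g ^ 2 :=
  stmt_10_general ℏ m lam L g hm hL hg β φ hsol hC1
end

section
/- Let g > 0 and let k ≥ 1 be an integer. If there exists a GP solution φ on [0,L] with parameter β, continuously differentiable on [0,L], not identically zero, and having exactly k − 1 interior zeros, then β < β_k. (Conversely to the existence result: quantum states with the nodal pattern of the k-th mode occur only past the k-th quantum critical point; together with existence this yields the staircase structure of quantum states in Figure 7.) -/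
open Set MeasureTheory intervalIntegral Filter Topology

/-!
The `k - 1` interior zeros cut `[0, L]` into `k` nodal intervals, so one of them, `[c, d]`, has
length at most `L / k`. On it `φ` has no zero and solves `φ'' + Q φ = 0` with
`Q = (ℏλ - β - g φ²) / (ℏ² / 4m)`. If `β ≥ β_k`, then `g > 0` gives `Q < (π / (d - c))²`, and
Sturm comparison with `sin (π (x - c) / (d - c))` shows that `φ` cannot vanish at both `c` and `d`.
-/

open Real

theorem IsPreconnected.forall_pos_or_forall_neg {X α : Type*} [TopologicalSpace X]
    [LinearOrder α] [TopologicalSpace α] [OrderClosedTopology α] [Zero α] {s : Set X}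
    {f : X → α} (hs : IsPreconnected s) (hf : ContinuousOn f s) (hf0 : ∀ x ∈ s, f x ≠ 0) :
    (∀ x ∈ s, 0 < f x) ∨ (∀ x ∈ s, f x < 0) := by
  by_contra! h
  obtain ⟨⟨x, hx, hfx⟩, ⟨y, hy, hfy⟩⟩ := h
  obtain ⟨z, hz, hfz⟩ := hs.intermediate_value hx hy hf ⟨hfx, hfy⟩
  exact hf0 z hz hfz

theorem Finset.exists_gap_mul_le {a b : ℝ} (hab : a < b) {n : ℕ} (Z : Finset ℝ)
    (hZ : ∀ z ∈ Z, z ∈ Set.Ioo a b) (hn : n ≤ Z.card + 1) :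
    ∃ c d, a ≤ c ∧ c < d ∧ d ≤ b ∧ c ∈ insert a Z ∧ d ∈ insert b Z ∧
      n * (d - c) ≤ b - a ∧ ∀ z ∈ Z, z ∉ Set.Ioo c d := by
  classical
  induction Z using Finset.induction_on_max generalizing b n with
  | empty =>
    refine ⟨a, b, le_rfl, hab, le_rfl, mem_insert_self _ _, mem_insert_self _ _, ?_, by simp⟩
    have : (n : ℝ) ≤ 1 := by exact_mod_cast hn
    nlinarith
  | insert x s hxs ih =>
    have hx : x ∈ Set.Ioo a b := hZ x (mem_insert_self _ _)
    rw [card_insert_of_notMem fun h => (hxs x h).false] at hn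
    by_cases hlast : n * (b - x) ≤ b - a
    · refine ⟨x, b, hx.1.le, hx.2, le_rfl, by simp, mem_insert_self _ _, hlast, ?_⟩
      simp only [mem_insert, forall_eq_or_imp, Set.mem_Ioo, lt_irrefl, false_and,
        not_false_eq_true, true_and]
      exact fun z hz hxz => (hxs z hz).not_gt hxz.1
    · have hn2 : 2 ≤ n := by
        by_contra! h
        interval_cases n <;> simp at hlast <;> linarith [hx.1]
      obtain ⟨c, d, hac, hcd, hdx, hc, hd, hgap, hfree⟩ := ih hx.1 (n := n - 1)
        (fun z hz => ⟨(hZ z (mem_insert_of_mem hz)).1, hxs z hz⟩) (by omega)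
      refine ⟨c, d, hac, hcd, hdx.trans hx.2.le, ?_, ?_, ?_, ?_⟩
      · simp only [mem_insert] at hc ⊢; tauto
      · simp only [mem_insert] at hd ⊢; tauto
      · rw [Nat.cast_pred (by omega)] at hgap
        have hn2' : (2 : ℝ) ≤ n := by exact_mod_cast hn2
        nlinarith [not_le.1 hlast]
      · simp only [mem_insert, forall_eq_or_imp]
        exact ⟨fun h => (hdx.trans_lt' h.2).false, hfree⟩

theorem not_forall_pos_of_lt_sq_pi_div {a b : ℝ} {φ φ' Q : ℝ → ℝ} (hab : a < b)
    (hφc : ContinuousOn φ (Icc a b)) (hφ'c : ContinuousOn φ' (Icc a b))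
    (hφ : ∀ x ∈ Ioo a b, HasDerivAt φ (φ' x) x)
    (hφ' : ∀ x ∈ Ioo a b, HasDerivAt φ' (-(Q x * φ x)) x)
    (hQ : ∀ x ∈ Ioo a b, Q x < (π / (b - a)) ^ 2) (ha : φ a = 0) (hb : φ b = 0) :
    ¬ ∀ x ∈ Ioo a b, 0 < φ x := by
  intro hpos
  set ω := π / (b - a)
  have hω : 0 < ω := div_pos pi_pos (sub_pos.2 hab)
  have hωb : ω * (b - a) = π := div_mul_cancel₀ _ (sub_pos.2 hab).ne'
  -- The Wronskian of `φ` and the comparison solution `sin (ω (x - a))`: it vanishes at both ends,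
  -- yet its derivative `(Q - ω²) φ sin (ω (x - a))` is negative.
  set W : ℝ → ℝ := fun x => φ x * (ω * cos (ω * (x - a))) - φ' x * sin (ω * (x - a))
  have hsin : ∀ x ∈ Ioo a b, 0 < sin (ω * (x - a)) := fun x hx =>
    sin_pos_of_pos_of_lt_pi (mul_pos hω (sub_pos.2 hx.1))
      (hωb ▸ mul_lt_mul_of_pos_left (by linarith [hx.2]) hω)
  have hW' : ∀ x ∈ Ioo a b, HasDerivAt W ((Q x - ω ^ 2) * φ x * sin (ω * (x - a))) x := by
    intro x hx
    have hlin : HasDerivAt (fun y => ω * (y - a)) ω x := by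
      simpa using ((hasDerivAt_id x).sub_const a).const_mul ω
    refine (((hφ x hx).mul (((hasDerivAt_cos _).comp x hlin).const_mul ω)).sub
      ((hφ' x hx).mul ((hasDerivAt_sin _).comp x hlin))).congr_deriv ?_
    simp only [Function.comp_apply]
    ring
  have hW : StrictAntiOn W (Icc a b) := by
    refine strictAntiOn_of_deriv_neg (convex_Icc a b) (by fun_prop) fun x hx => ?_
    rw [interior_Icc] at hx
    rw [(hW' x hx).deriv]
    exact mul_neg_of_neg_of_pos (mul_neg_of_neg_of_pos (sub_neg.2 (hQ x hx)) (hpos x hx))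
      (hsin x hx)
  have := hW (left_mem_Icc.2 hab.le) (right_mem_Icc.2 hab.le) hab
  simp [W, ha, hb, hωb] at this

theorem exists_mem_Ioo_eq_zero_of_lt_sq_pi_div {a b : ℝ} {φ φ' Q : ℝ → ℝ} (hab : a < b)
    (hφc : ContinuousOn φ (Icc a b)) (hφ'c : ContinuousOn φ' (Icc a b))
    (hφ : ∀ x ∈ Ioo a b, HasDerivAt φ (φ' x) x)
    (hφ' : ∀ x ∈ Ioo a b, HasDerivAt φ' (-(Q x * φ x)) x)
    (hQ : ∀ x ∈ Ioo a b, Q x < (π / (b - a)) ^ 2) (ha : φ a = 0) (hb : φ b = 0) :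
    ∃ x ∈ Ioo a b, φ x = 0 := by
  by_contra! hne
  rcases isPreconnected_Ioo.forall_pos_or_forall_neg (hφc.mono Ioo_subset_Icc_self) hne with
    hpos | hneg
  · exact not_forall_pos_of_lt_sq_pi_div hab hφc hφ'c hφ hφ' hQ ha hb hpos
  · refine not_forall_pos_of_lt_sq_pi_div (φ := fun x => -φ x) (φ' := fun x => -φ' x) hab
      hφc.neg hφ'c.neg (fun x hx => (hφ x hx).neg) (fun x hx => ?_) hQ (by simp [ha])
      (by simp [hb]) fun x hx => neg_pos.2 (hneg x hx)
    exact (hφ' x hx).neg.congr_deriv (by ring)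

theorem IsGPSolution.restrict {ℏ m lam g a b c d β : ℝ} {φ : ℝ → ℝ}
    (hsol : IsGPSolution ℏ m lam g a b β φ) (hac : a ≤ c) (hdb : d ≤ b) (hc : φ c = 0)
    (hd : φ d = 0) : IsGPSolution ℏ m lam g c d β φ :=
  ⟨hsol.1.mono (Icc_subset_Icc hac hdb), hsol.2.1.mono (Ioo_subset_Ioo hac hdb),
    fun x hx => hsol.2.2.1 x (Ioo_subset_Ioo hac hdb hx), hc, hd⟩

theorem IsGPSolution.lt_betaCrit_one {ℏ m lam g a b β : ℝ} {φ : ℝ → ℝ}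
    (hsol : IsGPSolution ℏ m lam g a b β φ) (hℏ : 0 < ℏ) (hm : 0 < m) (hg : 0 < g)
    (hab : a < b) (hC1 : ContDiffOn ℝ 1 φ (Icc a b)) (hne : ∀ x ∈ Ioo a b, φ x ≠ 0) :
    β < betaCrit ℏ m lam (b - a) 1 := by
  obtain ⟨hcont, hC2, hode, ha, hb⟩ := hsol
  by_contra! hβ
  set κ := ℏ ^ 2 / (4 * m)
  have hκ : 0 < κ := by positivity
  have hφ : ∀ x ∈ Ioo a b, HasDerivAt φ (deriv φ x) x := fun x hx =>
    ((hC2.differentiableOn two_ne_zero).differentiableAt (isOpen_Ioo.mem_nhds hx)).hasDerivAt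
  have hφ' : ∀ x ∈ Ioo a b, HasDerivAt (deriv φ) (deriv (deriv φ) x) x := fun x hx =>
    (((hC2.deriv_of_isOpen isOpen_Ioo (by norm_num)).differentiableOn one_ne_zero).differentiableAt
      (isOpen_Ioo.mem_nhds hx)).hasDerivAt
  have hderiv : EqOn (derivWithin φ (Icc a b)) (deriv φ) (Ioo a b) := fun x hx =>
    derivWithin_of_mem_nhds (mem_of_superset (isOpen_Ioo.mem_nhds hx) Ioo_subset_Icc_self)
  set Q : ℝ → ℝ := fun x => (ℏ * lam - β - g * φ x ^ 2) / κ
  have hφ'' : ∀ x ∈ Ioo a b, deriv (deriv φ) x = -(Q x * φ x) := fun x hx => by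
    rw [div_mul_eq_mul_div, ← neg_div, eq_div_iff hκ.ne']
    linear_combination -hode x hx
  have hQ : ∀ x ∈ Ioo a b, Q x < (π / (b - a)) ^ 2 := fun x hx => by
    have := hne x hx
    have hgφ : 0 < g * φ x ^ 2 := by positivity
    simp only [betaCrit, Nat.cast_one, one_mul] at hβ
    rw [div_lt_iff₀ hκ]
    linarith
  obtain ⟨x, hx, hx0⟩ := exists_mem_Ioo_eq_zero_of_lt_sq_pi_div hab hcont
    (hC1.continuousOn_derivWithin (uniqueDiffOn_Icc hab) le_rfl)
    (fun x hx => hderiv hx ▸ hφ x hx)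
    (fun x hx => hφ'' x hx ▸ (hφ' x hx).congr_of_eventuallyEq
      (eventuallyEq_of_mem (isOpen_Ioo.mem_nhds hx) hderiv)) hQ ha hb
  exact hne x hx hx0

theorem betaCrit_one_le_betaCrit {ℏ m lam ℓ L : ℝ} {k : ℕ} (hm : 0 < m) (hℓ : 0 < ℓ)
    (hL : 0 < L) (hkℓ : k * ℓ ≤ L) : betaCrit ℏ m lam ℓ 1 ≤ betaCrit ℏ m lam L k := by
  have hfreq : k * π / L ≤ π / ℓ := by
    rw [div_le_div_iff₀ hL hℓ]
    nlinarith [pi_pos]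
  simp only [betaCrit, Nat.cast_one, one_mul]
  gcongr

theorem stmt_13_general (ℏ m lam L g : ℝ) (hℏ : 0 < ℏ) (hm : 0 < m) (hL : 0 < L)
    (hg : 0 < g) (k : ℕ) (hk : 1 ≤ k) (β : ℝ) (φ : ℝ → ℝ)
    (hsol : IsGPSolution ℏ m lam g 0 L β φ)
    (hC1 : ContDiffOn ℝ 1 φ (Set.Icc 0 L))
    (hfin : {x ∈ Set.Ioo (0:ℝ) L | φ x = 0}.Finite)
    (hcard : {x ∈ Set.Ioo (0:ℝ) L | φ x = 0}.ncard = k - 1) :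
    β < betaCrit ℏ m lam L k := by
  obtain ⟨c, d, h0c, hcd, hdL, hc, hd, hgap, hfree⟩ := hfin.toFinset.exists_gap_mul_le hL (n := k)
    (fun z hz => (hfin.mem_toFinset.1 hz).1)
    (by rw [← Set.ncard_eq_toFinset_card _ hfin, hcard]; omega)
  have hφc : φ c = 0 := by
    rcases Finset.mem_insert.1 hc with rfl | hc
    exacts [hsol.2.2.2.1, (hfin.mem_toFinset.1 hc).2]
  have hφd : φ d = 0 := by
    rcases Finset.mem_insert.1 hd with rfl | hd
    exacts [hsol.2.2.2.2, (hfin.mem_toFinset.1 hd).2]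
  have hne : ∀ x ∈ Ioo c d, φ x ≠ 0 := fun x hx hx0 =>
    hfree x (hfin.mem_toFinset.2 ⟨Ioo_subset_Ioo h0c hdL hx, hx0⟩) hx
  calc β < betaCrit ℏ m lam (d - c) 1 :=
        (hsol.restrict h0c hdL hφc hφd).lt_betaCrit_one hℏ hm hg hcd
          (hC1.mono (Icc_subset_Icc h0c hdL)) hne
    _ ≤ betaCrit ℏ m lam L k :=
        betaCrit_one_le_betaCrit hm (sub_pos.2 hcd) hL (by simpa using hgap)

/-- quantum states with the nodal pattern of the `k`-th mode occur
only past the `k`-th quantum critical point. -/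
theorem stmt_13 (ℏ m lam L g : ℝ) (hℏ : 0 < ℏ) (hm : 0 < m) (hL : 0 < L)
    (hg : 0 < g) (k : ℕ) (hk : 1 ≤ k) (β : ℝ) (φ : ℝ → ℝ)
    (hsol : IsGPSolution ℏ m lam g 0 L β φ)
    (hC1 : ContDiffOn ℝ 1 φ (Set.Icc 0 L))
    (hne : ∃ x ∈ Set.Icc (0:ℝ) L, φ x ≠ 0)
    (hfin : {x ∈ Set.Ioo (0:ℝ) L | φ x = 0}.Finite)
    (hcard : {x ∈ Set.Ioo (0:ℝ) L | φ x = 0}.ncard = k - 1) :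
    β < betaCrit ℏ m lam L k :=
  stmt_13_general ℏ m lam L g hℏ hm hL hg k hk β φ hsol hC1 hfin hcard
end
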